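/- arXiv:2302.07404 — 12 statements merged into one kernel-verified Lean document; each statement's English description precedes it below -/
import Mathlib

section
/- Let μ > 0 and let f : ℝ^d → ℝ be a differentiable μ-strongly convex function with global minimizer x⋆ and minimum value f⋆ = f(x⋆). Let x : [0,∞) → ℝ^d be differentiable and satisfy the gradient flow x'(t) = -∇f(x(t)) for all t ≥ 0, with x(0) = x₀. Then for every t ≥ 0, f(x(t)) - f⋆ ≤ e^{-μt} ( f(x₀) - f⋆ + (μ/2)‖x₀ - x⋆‖² ). -/
open RealInnerProductSpace

/-- Gradient inequality for a `μ`-strongly convex differentiable function. -/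
lemma strong_convex_gradient_ineq {d : ℕ} (μ : ℝ)
    (f : EuclideanSpace ℝ (Fin d) → ℝ)
    (hf : Differentiable ℝ f)
    (hsc : ConvexOn ℝ Set.univ (fun y => f y - μ / 2 * ‖y‖ ^ 2))
    (a b : EuclideanSpace ℝ (Fin d)) :
    f a + ⟪gradient f a, b - a⟫ + μ / 2 * ‖b - a‖ ^ 2 ≤ f b := by
  set g : EuclideanSpace ℝ (Fin d) → ℝ := fun y => f y - μ / 2 * ‖y‖ ^ 2 with hg
  set v : EuclideanSpace ℝ (Fin d) := b - a with hv
  -- the curve t ↦ a + t • v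
  set c : ℝ → EuclideanSpace ℝ (Fin d) := fun t => a + t • v with hc
  have hc0 : c 0 = a := by simp [hc]
  have hc1 : c 1 = b := by simp [hc, hv]
  -- convexity of φ = g ∘ c on univ
  have hφconv : ConvexOn ℝ Set.univ (fun t => g (c t)) := by
    have := hsc.comp_affineMap (AffineMap.lineMap a b)
    have heq : (fun t : ℝ => g (c t)) = (g ∘ (AffineMap.lineMap a b : ℝ →ᵃ[ℝ] _)) := by
      funext t
      have harg : (AffineMap.lineMap a b : ℝ →ᵃ[ℝ] _) t = c t := by
        rw [AffineMap.lineMap_apply_module]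
        simp [hc, hv]
        module
      simp [Function.comp, harg]
    rw [heq]
    simpa using this
  -- derivative of the curve at 0
  have hcurve : HasDerivAt c v 0 := by
    have h1 : HasDerivAt (fun t : ℝ => t • v) ((1 : ℝ) • v) 0 :=
      (hasDerivAt_id (0 : ℝ)).smul_const v
    simpa [hc] using h1.const_add a
  -- derivative of t ↦ f (c t) at 0
  have hgrad : HasGradientAt f (gradient f a) a := (hf a).hasGradientAt
  have hfd : HasFDerivAt f ((InnerProductSpace.toDual ℝ _) (gradient f a)) a :=
    hasGradientAt_iff_hasFDerivAt.mp hgrad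
  have hψ : HasDerivAt (fun t => f (c t)) (⟪gradient f a, v⟫) 0 := by
    have hfd' : HasFDerivAt f ((InnerProductSpace.toDual ℝ _) (gradient f a)) (c 0) := by
      rw [hc0]; exact hfd
    have := hfd'.comp_hasDerivAt (0 : ℝ) hcurve
    rw [InnerProductSpace.toDual_apply_apply] at this; exact this
  -- derivative of t ↦ ‖c t‖² at 0
  have hq : HasDerivAt (fun t => ⟪c t, c t⟫) (⟪a, v⟫ + ⟪v, a⟫) 0 := by
    have := HasDerivAt.inner ℝ hcurve hcurve
    simpa [hc0] using this
  have hq' : HasDerivAt (fun t => ‖c t‖ ^ 2) (2 * ⟪a, v⟫) 0 := by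
    have heq : (fun t => ‖c t‖ ^ 2) = fun t => ⟪c t, c t⟫ := by
      funext t; rw [real_inner_self_eq_norm_sq]
    rw [heq]
    have : ⟪a, v⟫ + ⟪v, a⟫ = 2 * ⟪a, v⟫ := by rw [real_inner_comm v a]; ring
    rwa [this] at hq
  have hφ : HasDerivAt (fun t => g (c t)) (⟪gradient f a, v⟫ - μ / 2 * (2 * ⟪a, v⟫)) 0 :=
    hψ.sub (hq'.const_mul (μ / 2))
  -- slope inequality
  have hslope := hφconv.le_slope_of_hasDerivAt (Set.mem_univ (0 : ℝ)) (Set.mem_univ (1 : ℝ))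
    one_pos hφ
  rw [slope_def_field] at hslope
  simp only [hc0, hc1] at hslope
  have hslope' : ⟪gradient f a, v⟫ - μ / 2 * (2 * ⟪a, v⟫) ≤ g b - g a := by
    have h0 : (g b - g a) / (1 - 0) = g b - g a := by norm_num
    rw [h0] at hslope
    linarith [hslope]
  have hnorm : ‖b - a‖ ^ 2 = ‖b‖ ^ 2 - 2 * ⟪b, a⟫ + ‖a‖ ^ 2 := norm_sub_sq_real b a
  have hav : ⟪a, v⟫ = ⟪b, a⟫ - ‖a‖ ^ 2 := by
    rw [hv, inner_sub_right, real_inner_self_eq_norm_sq, real_inner_comm]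
  have key : f a + ⟪gradient f a, v⟫ + μ / 2 * ‖b - a‖ ^ 2 - f b
      = (⟪gradient f a, v⟫ - μ / 2 * (2 * ⟪a, v⟫)) - (g b - g a) := by
    simp only [hg]
    rw [hnorm, hav]
    ring
  have : f a + ⟪gradient f a, v⟫ + μ / 2 * ‖b - a‖ ^ 2 - f b ≤ 0 := by
    rw [key]; linarith
  linarith

/-- Convergence rate of the continuous gradient flow for `μ`-strongly convex objectives:
`f(x(t)) - f⋆ ≤ e^{-μt} (f(x₀) - f⋆ + (μ/2)‖x₀ - x⋆‖²)`. -/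
theorem gradient_flow_strongly_convex_rate {d : ℕ} (μ : ℝ) (hμ : 0 < μ)
    (f : EuclideanSpace ℝ (Fin d) → ℝ)
    (hf : Differentiable ℝ f)
    (hsc : ConvexOn ℝ Set.univ (fun y => f y - μ / 2 * ‖y‖ ^ 2))
    (xstar x₀ : EuclideanSpace ℝ (Fin d))
    (hmin : ∀ y, f xstar ≤ f y)
    (x : ℝ → EuclideanSpace ℝ (Fin d))
    (hflow : ∀ t ≥ (0 : ℝ), HasDerivAt x (-gradient f (x t)) t)
    (hx0 : x 0 = x₀) :
    ∀ t ≥ (0 : ℝ), f (x t) - f xstar ≤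
      Real.exp (-μ * t) * (f x₀ - f xstar + μ / 2 * ‖x₀ - xstar‖ ^ 2) := by
  -- Lyapunov function
  set E : ℝ → ℝ := fun t => f (x t) - f xstar + μ / 2 * ⟪x t - xstar, x t - xstar⟫ with hE
  set G : ℝ → ℝ := fun t => Real.exp (μ * t) * E t with hG
  -- derivative of E at t ≥ 0
  have hEderiv : ∀ t ≥ (0 : ℝ), HasDerivAt E
      (-⟪gradient f (x t), gradient f (x t)⟫
        - μ * ⟪gradient f (x t), x t - xstar⟫) t := by
    intro t ht
    set gt := gradient f (x t) with hgt
    have hgrad : HasGradientAt f gt (x t) := (hf (x t)).hasGradientAt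
    have hfd : HasFDerivAt f ((InnerProductSpace.toDual ℝ _) gt) (x t) :=
      hasGradientAt_iff_hasFDerivAt.mp hgrad
    have h1 : HasDerivAt (fun s => f (x s)) (⟪gt, -gt⟫) t := by
      have := hfd.comp_hasDerivAt t (hflow t ht)
      rw [InnerProductSpace.toDual_apply_apply] at this; exact this
    have hr : HasDerivAt (fun s => x s - xstar) (-gt) t := (hflow t ht).sub_const xstar
    have h2 : HasDerivAt (fun s => ⟪x s - xstar, x s - xstar⟫)
        (⟪x t - xstar, -gt⟫ + ⟪-gt, x t - xstar⟫) t := HasDerivAt.inner ℝ hr hr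
    have h3 := h1.add (h2.const_mul (μ / 2))
    have heq : ⟪gt, -gt⟫ + μ / 2 * (⟪x t - xstar, -gt⟫ + ⟪-gt, x t - xstar⟫)
        = -⟪gt, gt⟫ - μ * ⟪gt, x t - xstar⟫ := by
      rw [inner_neg_right, inner_neg_right, inner_neg_left,
        real_inner_comm (x t - xstar) gt]
      ring
    rw [heq] at h3
    have : E = fun s => (f (x s) + μ / 2 * ⟪x s - xstar, x s - xstar⟫) - f xstar := by
      funext s; simp [hE]; ring
    rw [this]
    exact h3.sub_const (f xstar)
  -- G is antitone on [0, ∞)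
  have hGderiv : ∀ t ≥ (0 : ℝ), HasDerivAt G
      (Real.exp (μ * t) * μ * E t + Real.exp (μ * t) *
        (-⟪gradient f (x t), gradient f (x t)⟫
          - μ * ⟪gradient f (x t), x t - xstar⟫)) t := by
    intro t ht
    have hexp : HasDerivAt (fun s => Real.exp (μ * s)) (Real.exp (μ * t) * μ) t := by
      have h : HasDerivAt (fun s : ℝ => μ * s) μ t := by
        simpa using (hasDerivAt_id t).const_mul μ
      exact h.exp
    have := hexp.mul (hEderiv t ht)
    simpa [hG, mul_comm, mul_assoc, mul_left_comm, Pi.mul_def] using this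
  have hGnonpos : ∀ t ≥ (0 : ℝ), deriv G t ≤ 0 := by
    intro t ht
    rw [(hGderiv t ht).deriv]
    set gt := gradient f (x t)
    -- strong convexity inequality with a = x t, b = xstar
    have hsci := strong_convex_gradient_ineq μ f hf hsc (x t) xstar
    have h1 : ⟪gt, xstar - x t⟫ = -⟪gt, x t - xstar⟫ := by
      rw [← inner_neg_right]; congr 1; abel
    have h2 : ‖xstar - x t‖ ^ 2 = ⟪x t - xstar, x t - xstar⟫ := by
      rw [real_inner_self_eq_norm_sq, ← norm_neg]; congr 1; abel
    rw [h1, h2] at hsci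
    -- so E t ≤ ⟪gt, x t - xstar⟫
    have hEle : E t ≤ ⟪gt, x t - xstar⟫ := by simp only [hE]; linarith
    have hgg : (0 : ℝ) ≤ ⟪gt, gt⟫ := real_inner_self_nonneg
    have hexp_pos : (0 : ℝ) < Real.exp (μ * t) := Real.exp_pos _
    have : Real.exp (μ * t) * μ * E t + Real.exp (μ * t) *
        (-⟪gt, gt⟫ - μ * ⟪gt, x t - xstar⟫)
        = Real.exp (μ * t) * (μ * (E t - ⟪gt, x t - xstar⟫) - ⟪gt, gt⟫) := by ring
    rw [this]
    apply mul_nonpos_of_nonneg_of_nonpos hexp_pos.le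
    have : μ * (E t - ⟪gt, x t - xstar⟫) ≤ 0 :=
      mul_nonpos_of_nonneg_of_nonpos hμ.le (by linarith)
    linarith
  have hGanti : AntitoneOn G (Set.Ici 0) := by
    apply antitoneOn_of_deriv_nonpos (convex_Ici 0)
    · intro t ht
      exact ((hGderiv t ht).continuousAt).continuousWithinAt
    · intro t ht
      rw [interior_Ici] at ht
      exact ((hGderiv t (le_of_lt ht)).differentiableAt).differentiableWithinAt
    · intro t ht
      rw [interior_Ici] at ht
      exact hGnonpos t (le_of_lt ht)
  -- conclude
  intro t ht
  have hGt : G t ≤ G 0 := hGanti (Set.self_mem_Ici) ht ht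
  have hG0 : G 0 = E 0 := by simp [hG]
  have hE0 : E 0 = f x₀ - f xstar + μ / 2 * ‖x₀ - xstar‖ ^ 2 := by
    simp only [hE, hx0, real_inner_self_eq_norm_sq]
  have hexp_pos : (0 : ℝ) < Real.exp (μ * t) := Real.exp_pos _
  have hEt : E t ≤ Real.exp (-μ * t) * (f x₀ - f xstar + μ / 2 * ‖x₀ - xstar‖ ^ 2) := by
    rw [← hE0, ← hG0]
    have h1 : Real.exp (μ * t) * E t ≤ G 0 := hGt
    have h2 : Real.exp (-μ * t) = (Real.exp (μ * t))⁻¹ := by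
      rw [← Real.exp_neg]; ring_nf
    rw [h2, inv_mul_eq_div, le_div_iff₀ hexp_pos, mul_comm]
    exact h1
  have hinner : (0 : ℝ) ≤ μ / 2 * ⟪x t - xstar, x t - xstar⟫ :=
    mul_nonneg (by linarith) real_inner_self_nonneg
  have hle : f (x t) - f xstar ≤ E t := by simp only [hE]; linarith
  exact le_trans hle hEt
end

section
/- Let f : ℝ^d → ℝ be a differentiable convex function with global minimizer x⋆ and minimum value f⋆ = f(x⋆). Let A : [0,∞) → [0,∞) be a differentiable strictly monotonically increasing function with A(0) = 0 (so A(t) > 0 for t > 0). Let x, v : [0,∞) → ℝ^d be differentiable functions, continuous at 0 with x(0) = x₀ and v(0) = v₀, satisfying for all t > 0 the accelerated gradient flow A(t) x'(t) = A'(t) (v(t) - x(t)) and v'(t) = -(A'(t)/4) ∇f(x(t)). Then for every t > 0, f(x(t)) - f⋆ ≤ 2‖x₀ - x⋆‖² / A(t). -/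
open RealInnerProductSpace

section AuxAGF

open Filter Set Topology

private lemma agf_grad_ineq {d : ℕ} (f : EuclideanSpace ℝ (Fin d) → ℝ)
    (hf : Differentiable ℝ f) (hconv : ConvexOn ℝ Set.univ f)
    (a y : EuclideanSpace ℝ (Fin d)) :
    ⟪gradient f a, y - a⟫ ≤ f y - f a := by
  set g : ℝ → ℝ := fun θ => f (a + θ • (y - a)) with hg
  have hgc : ConvexOn ℝ Set.univ g := by
    have h := hconv.comp_affineMap (AffineMap.lineMap a y : ℝ →ᵃ[ℝ] _)
    simp only [Set.preimage_univ] at h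
    have heq : g = f ∘ ⇑(AffineMap.lineMap a y) := by
      funext θ
      simp [g, AffineMap.lineMap_apply, add_comm]
    rw [heq]; exact h
  have hline : HasDerivAt (fun θ : ℝ => a + θ • (y - a)) (y - a) 0 := by
    simpa using ((hasDerivAt_id (0:ℝ)).smul_const (y - a)).const_add a
  have hfd : HasFDerivAt f (InnerProductSpace.toDual ℝ _ (gradient f a)) a :=
    (hf a).hasGradientAt
  have hD : HasDerivAt g (⟪gradient f a, y - a⟫) 0 := by
    have := hfd.comp_hasDerivAt_of_eq 0 hline (by simp)
    exact this
  have := hgc.le_slope_of_hasDerivAt (Set.mem_univ 0) (Set.mem_univ 1) one_pos hD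
  simpa [slope_def_field, g] using this

private lemma agf_deriv_nonneg (A A' : ℝ → ℝ)
    (hA : ∀ t ≥ (0 : ℝ), HasDerivAt A (A' t) t)
    (hAmono : StrictMonoOn A (Set.Ici 0)) (t : ℝ) (ht : 0 ≤ t) : 0 ≤ A' t := by
  have hs : Tendsto (slope A t) (𝓝[>] t) (𝓝 (A' t)) :=
    (hasDerivAt_iff_tendsto_slope.mp (hA t ht)).mono_left
      (nhdsWithin_mono _ fun y hy => ne_of_gt hy)
  refine ge_of_tendsto hs ?_
  filter_upwards [self_mem_nhdsWithin] with y hy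
  have h1 : A t < A y := hAmono (mem_Ici.mpr ht) (mem_Ici.mpr (le_of_lt (lt_of_le_of_lt ht hy))) hy
  have hyt : (0:ℝ) < y - t := sub_pos.mpr hy
  rw [slope_def_field]
  exact le_of_lt (div_pos (sub_pos.mpr h1) hyt)

private lemma agf_init {d : ℕ}
    (x₀ v₀ : EuclideanSpace ℝ (Fin d))
    (A A' : ℝ → ℝ)
    (hA : ∀ t ≥ (0 : ℝ), HasDerivAt A (A' t) t)
    (hA0 : A 0 = 0)
    (hAmono : StrictMonoOn A (Set.Ici 0))
    (x v : ℝ → EuclideanSpace ℝ (Fin d))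
    (x' : ℝ → EuclideanSpace ℝ (Fin d))
    (hx : ∀ t > (0 : ℝ), HasDerivAt x (x' t) t)
    (hflow1 : ∀ t > (0 : ℝ), A t • x' t = A' t • (v t - x t))
    (hxc : ContinuousAt x 0) (hvc : ContinuousAt v 0)
    (hx0 : x 0 = x₀) (hv0 : v 0 = v₀) : x₀ = v₀ := by
  have hA'nonneg : ∀ t ≥ (0:ℝ), 0 ≤ A' t := fun t ht => agf_deriv_nonneg A A' hA hAmono t ht
  have hApos : ∀ t > (0:ℝ), 0 < A t := fun t ht =>
    hA0 ▸ hAmono (mem_Ici.mpr le_rfl) (mem_Ici.mpr ht.le) ht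
  set w : ℝ → EuclideanSpace ℝ (Fin d) := fun r => A r • (x r - v₀) with hw
  have key : ∀ ε > (0:ℝ), ∃ δ > (0:ℝ), ∀ t, 0 < t → t ≤ δ → ‖x t - v₀‖ ≤ ε := by
    intro ε hε
    obtain ⟨δ, hδ, hδv⟩ := Metric.continuousAt_iff.mp hvc ε hε
    refine ⟨δ/2, by positivity, ?_⟩
    intro t ht htδ
    have hvb : ∀ r, 0 ≤ r → r ≤ t → ‖v r - v₀‖ ≤ ε := by
      intro r hr hrt
      have : dist r 0 < δ := by
        rw [Real.dist_eq, sub_zero, abs_of_nonneg hr]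
        linarith
      have := hδv this
      rw [dist_eq_norm, hv0] at this
      exact this.le
    have hwt : ∀ s, 0 < s → s < t → ‖w t‖ ≤ ‖w s‖ + ε * (A t - A s) := by
      intro s hs hst
      have main := image_norm_le_of_norm_deriv_right_le_deriv_boundary'
        (f := w) (f' := fun r => A' r • (v r - v₀)) (a := s) (b := t)
        (B := fun r => ‖w s‖ + ε * (A r - A s)) (B' := fun r => ε * A' r)
        ?_ ?_ (by simp) ?_ ?_ ?_
      · have := main (right_mem_Icc.mpr hst.le)
        simpa using this
      · intro r hr
        have hr0 : 0 < r := lt_of_lt_of_le hs hr.1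
        exact (((hA r hr0.le).continuousAt.smul
          (((hx r hr0).continuousAt).sub continuousAt_const))).continuousWithinAt
      · intro r hr
        have hr0 : 0 < r := lt_of_lt_of_le hs hr.1
        have hd : HasDerivAt w (A r • x' r + A' r • (x r - v₀)) r :=
          (hA r hr0.le).smul ((hx r hr0).sub_const v₀)
        have : A r • x' r + A' r • (x r - v₀) = A' r • (v r - v₀) := by
          rw [hflow1 r hr0, ← smul_add]
          congr 1
          abel
        rw [this] at hd
        exact hd.hasDerivWithinAt
      · intro r hr
        have hr0 : 0 < r := lt_of_lt_of_le hs hr.1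
        exact (continuousAt_const.add
          (continuousAt_const.mul
            ((hA r hr0.le).continuousAt.sub continuousAt_const))).continuousWithinAt
      · intro r hr
        have hr0 : 0 < r := lt_of_lt_of_le hs hr.1
        exact (((((hA r hr0.le).sub_const (A s)).const_mul ε).const_add (‖w s‖))).hasDerivWithinAt
      · intro r hr
        have hr0 : 0 < r := lt_of_lt_of_le hs hr.1
        show ‖A' r • (v r - v₀)‖ ≤ ε * A' r
        rw [norm_smul, Real.norm_eq_abs, abs_of_nonneg (hA'nonneg r hr0.le), mul_comm ε (A' r)]
        exact mul_le_mul_of_nonneg_left (hvb r hr0.le hr.2.le) (hA'nonneg r hr0.le)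
    have hwcont : Tendsto (fun s => ‖w s‖ + ε * (A t - A s)) (𝓝[>] (0:ℝ)) (𝓝 (ε * A t)) := by
      have hwc : ContinuousAt w 0 :=
        (hA 0 le_rfl).continuousAt.smul (hxc.sub continuousAt_const)
      have h1 : Tendsto (fun s => ‖w s‖ + ε * (A t - A s)) (𝓝 (0:ℝ))
          (𝓝 (‖w 0‖ + ε * (A t - A 0))) :=
        (hwc.norm.add (continuousAt_const.mul
          (continuousAt_const.sub (hA 0 le_rfl).continuousAt)))
      have h0 : ‖w 0‖ + ε * (A t - A 0) = ε * A t := by simp [w, hA0]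
      rw [h0] at h1
      exact h1.mono_left nhdsWithin_le_nhds
    have hbound : ‖w t‖ ≤ ε * A t := by
      refine ge_of_tendsto hwcont ?_
      filter_upwards [Ioo_mem_nhdsGT_of_mem (Set.mem_Ico.mpr ⟨le_rfl, ht⟩)] with s hs
      exact hwt s hs.1 hs.2
    have hAt := hApos t ht
    have heq : ‖w t‖ = A t * ‖x t - v₀‖ := by
      show ‖A t • (x t - v₀)‖ = _
      rw [norm_smul, Real.norm_eq_abs, abs_of_pos hAt]
    rw [heq, mul_comm ε (A t)] at hbound
    exact le_of_mul_le_mul_left hbound hAt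
  have h1 : Tendsto x (𝓝[>] (0:ℝ)) (𝓝 v₀) := by
    rw [Metric.tendsto_nhds]
    intro ε hε
    obtain ⟨δ, hδ, hkey⟩ := key (ε/2) (by positivity)
    filter_upwards [Ioc_mem_nhdsGT_of_mem (Set.mem_Ico.mpr ⟨le_rfl, hδ⟩)] with s hs
    rw [dist_eq_norm]
    exact lt_of_le_of_lt (hkey s hs.1 hs.2) (by linarith)
  have h2 : Tendsto x (𝓝[>] (0:ℝ)) (𝓝 x₀) := by
    rw [← hx0]
    exact hxc.continuousWithinAt.tendsto
  exact tendsto_nhds_unique h2 h1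

end AuxAGF

/-- Convergence rate of the accelerated gradient flow for convex objectives:
`f(x(t)) - f⋆ ≤ 2‖x₀ - x⋆‖² / A(t)`. -/
theorem accelerated_gradient_flow_convex_rate {d : ℕ}
    (f : EuclideanSpace ℝ (Fin d) → ℝ)
    (hf : Differentiable ℝ f)
    (hconv : ConvexOn ℝ Set.univ f)
    (xstar x₀ v₀ : EuclideanSpace ℝ (Fin d))
    (hmin : ∀ y, f xstar ≤ f y)
    (A A' : ℝ → ℝ)
    (hA : ∀ t ≥ (0 : ℝ), HasDerivAt A (A' t) t)
    (hA0 : A 0 = 0)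
    (hAmono : StrictMonoOn A (Set.Ici 0))
    (hAnonneg : ∀ t ≥ (0 : ℝ), 0 ≤ A t)
    (x v : ℝ → EuclideanSpace ℝ (Fin d))
    (x' v' : ℝ → EuclideanSpace ℝ (Fin d))
    (hx : ∀ t > (0 : ℝ), HasDerivAt x (x' t) t)
    (hv : ∀ t > (0 : ℝ), HasDerivAt v (v' t) t)
    (hflow1 : ∀ t > (0 : ℝ), A t • x' t = A' t • (v t - x t))
    (hflow2 : ∀ t > (0 : ℝ), v' t = -(A' t / 4) • gradient f (x t))
    (hxc : ContinuousAt x 0) (hvc : ContinuousAt v 0)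
    (hx0 : x 0 = x₀) (hv0 : v 0 = v₀) :
    ∀ t > (0 : ℝ), f (x t) - f xstar ≤ 2 * ‖x₀ - xstar‖ ^ 2 / A t := by
  intro T hT
  have hv0x0 : x₀ = v₀ := agf_init x₀ v₀ A A' hA hA0 hAmono x v x' hx hflow1 hxc hvc hx0 hv0
  have hA'nonneg : ∀ t ≥ (0:ℝ), 0 ≤ A' t := fun t ht => agf_deriv_nonneg A A' hA hAmono t ht
  have hAT : 0 < A T := hA0 ▸ hAmono (Set.mem_Ici.mpr le_rfl) (Set.mem_Ici.mpr hT.le) hT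
  set E : ℝ → ℝ := fun t => A t * (f (x t) - f xstar) + 2 * ⟪v t - xstar, v t - xstar⟫ with hE
  set E' : ℝ → ℝ := fun t => (A' t * (f (x t) - f xstar) + A t * ⟪gradient f (x t), x' t⟫)
      + 2 * (⟪v t - xstar, v' t⟫ + ⟪v' t, v t - xstar⟫) with hE'
  have hED : ∀ t ∈ Set.Ioo 0 T, HasDerivAt E (E' t) t := by
    intro t ht
    have hfx : HasDerivAt (fun s => f (x s)) (⟪gradient f (x t), x' t⟫) t := by
      have hfd : HasFDerivAt f (InnerProductSpace.toDual ℝ _ (gradient f (x t))) (x t) :=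
        (hf (x t)).hasGradientAt
      have := hfd.comp_hasDerivAt t (hx t ht.1)
      exact this
    have h1 : HasDerivAt (fun s => A s * (f (x s) - f xstar))
        (A' t * (f (x t) - f xstar) + A t * ⟪gradient f (x t), x' t⟫) t :=
      (hA t ht.1.le).mul (hfx.sub_const _)
    have h2 : HasDerivAt (fun s => ⟪v s - xstar, v s - xstar⟫)
        (⟪v t - xstar, v' t⟫ + ⟪v' t, v t - xstar⟫) t :=
      HasDerivAt.inner ℝ ((hv t ht.1).sub_const xstar) ((hv t ht.1).sub_const xstar)
    exact h1.add (h2.const_mul 2)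
  have hE'le : ∀ t ∈ Set.Ioo 0 T, E' t ≤ 0 := by
    intro t ht
    set g := gradient f (x t) with hgdef
    have e1 : A t * ⟪g, x' t⟫ = A' t * ⟪g, v t - x t⟫ := by
      rw [← real_inner_smul_right, hflow1 t ht.1, real_inner_smul_right]
    have e2 : ⟪v t - xstar, v' t⟫ = -(A' t / 4) * ⟪v t - xstar, g⟫ := by
      rw [hflow2 t ht.1, real_inner_smul_right]
    have e3 : ⟪v' t, v t - xstar⟫ = -(A' t / 4) * ⟪g, v t - xstar⟫ := by
      rw [hflow2 t ht.1, real_inner_smul_left]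
    have e4 : ⟪v t - xstar, g⟫ = ⟪g, v t - xstar⟫ := real_inner_comm _ _
    have e5 : ⟪g, v t - x t⟫ - ⟪g, v t - xstar⟫ = ⟪g, xstar - x t⟫ := by
      rw [← inner_sub_right]
      congr 1
      abel
    have hgi : ⟪g, xstar - x t⟫ ≤ f xstar - f (x t) :=
      agf_grad_ineq f hf hconv (x t) xstar
    have hA't : 0 ≤ A' t := hA'nonneg t ht.1.le
    have : E' t = A' t * ((f (x t) - f xstar) + ⟪g, xstar - x t⟫) := by
      simp only [hE']
      rw [e1, e2, e3, e4, ← e5]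
      ring
    rw [this]
    have hnp : (f (x t) - f xstar) + ⟪g, xstar - x t⟫ ≤ 0 := by linarith
    exact mul_nonpos_of_nonneg_of_nonpos hA't hnp
  -- continuity of E on [0, T]
  have hxcont : ContinuousOn x (Set.Icc 0 T) := by
    intro r hr
    rcases eq_or_lt_of_le hr.1 with h | h
    · exact (h ▸ hxc).continuousWithinAt
    · exact (hx r h).continuousAt.continuousWithinAt
  have hvcont : ContinuousOn v (Set.Icc 0 T) := by
    intro r hr
    rcases eq_or_lt_of_le hr.1 with h | h
    · exact (h ▸ hvc).continuousWithinAt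
    · exact (hv r h).continuousAt.continuousWithinAt
  have hAcont : ContinuousOn A (Set.Icc 0 T) := fun r hr =>
    (hA r hr.1).continuousAt.continuousWithinAt
  have hEcont : ContinuousOn E (Set.Icc 0 T) := by
    apply ContinuousOn.add
    · exact hAcont.mul ((hf.continuous.comp_continuousOn hxcont).sub continuousOn_const)
    · exact continuousOn_const.mul
        (ContinuousOn.inner (hvcont.sub continuousOn_const) (hvcont.sub continuousOn_const))
  have hanti : AntitoneOn E (Set.Icc 0 T) := by
    apply antitoneOn_of_deriv_nonpos (convex_Icc 0 T) hEcont
    · intro t ht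
      rw [interior_Icc] at ht
      exact (hED t ht).differentiableAt.differentiableWithinAt
    · intro t ht
      rw [interior_Icc] at ht
      rw [(hED t ht).deriv]
      exact hE'le t ht
  have hET : E T ≤ E 0 :=
    hanti (Set.left_mem_Icc.mpr hT.le) (Set.right_mem_Icc.mpr hT.le) hT.le
  have hE0 : E 0 = 2 * ‖x₀ - xstar‖ ^ 2 := by
    simp only [hE, hA0, hx0, hv0, zero_mul, zero_add, ← hv0x0]
    rw [real_inner_self_eq_norm_sq]
  have hinner : (0:ℝ) ≤ ⟪v T - xstar, v T - xstar⟫ := real_inner_self_nonneg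
  have hmain : A T * (f (x T) - f xstar) ≤ 2 * ‖x₀ - xstar‖ ^ 2 := by
    have : A T * (f (x T) - f xstar) ≤ E T := by
      simp only [hE]
      linarith
    linarith [hET, hE0 ▸ hET]
  rw [le_div_iff₀ hAT, mul_comm]
  exact hmain
end

section
/- Let μ > 0 and let f : ℝ^d → ℝ be a differentiable μ-strongly convex function with global minimizer x⋆ and minimum value f⋆ = f(x⋆). Let x, v : [0,∞) → ℝ^d be differentiable and satisfy for all t ≥ 0 the accelerated gradient flow x'(t) = √μ (v(t) - x(t)) and v'(t) = √μ ( x(t) - v(t) - ∇f(x(t))/μ ), with x(0) = x₀, v(0) = v₀. Then for every t ≥ 0, f(x(t)) - f⋆ ≤ e^{-√μ t} ( f(x₀) - f⋆ + (μ/2)‖v₀ - x⋆‖² ). -/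
open RealInnerProductSpace

variable {F : Type*} [NormedAddCommGroup F] [InnerProductSpace ℝ F]

/-- Tangent line inequality for convex differentiable functions. -/
lemma agf_convex_tangent_le {g : F → ℝ} (hg : ConvexOn ℝ Set.univ g)
    {a b : F} {L : F →L[ℝ] ℝ} (hL : HasFDerivAt g L a) :
    g a + L (b - a) ≤ g b := by
  set u : ℝ → F := fun t => a + t • (b - a) with hu
  have hψconv : ConvexOn ℝ Set.univ (fun t => g (u t)) := by
    have h := hg.comp_affineMap (AffineMap.lineMap a b : ℝ →ᵃ[ℝ] F)
    have he : (fun t => g (u t)) = (g ∘ (AffineMap.lineMap a b : ℝ →ᵃ[ℝ] F)) := by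
      funext t
      simp [hu, AffineMap.lineMap_apply, Function.comp, add_comm]
    rw [he]
    simpa using h
  have hline : HasDerivAt u (b - a) 0 := by
    simpa [hu] using ((hasDerivAt_id (0:ℝ)).smul_const (b - a)).const_add a
  have hu0 : u 0 = a := by simp [hu]
  have hd : HasDerivAt (fun t => g (u t)) (L (b - a)) 0 := by
    have := (hu0 ▸ hL).comp_hasDerivAt 0 hline
    exact this
  have hs := hψconv.le_slope_of_hasDerivAt (Set.mem_univ (0:ℝ)) (Set.mem_univ (1:ℝ))
    one_pos hd
  have h0 : u 0 = a := hu0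
  have h1 : u 1 = b := by simp [hu]
  rw [slope_def_field] at hs
  simp [h0, h1] at hs
  rw [map_sub]
  linarith

lemma agf_strong [CompleteSpace F] (μ : ℝ) (f : F → ℝ) (hf : Differentiable ℝ f)
    (hsc : ConvexOn ℝ Set.univ (fun y => f y - μ / 2 * ‖y‖ ^ 2)) (a b : F) :
    f a + ⟪gradient f a, b - a⟫ + μ / 2 * ‖b - a‖ ^ 2 ≤ f b := by
  have hfa : HasFDerivAt f ((InnerProductSpace.toDual ℝ F) (gradient f a)) a :=
    hasGradientAt_iff_hasFDerivAt.mp (hf a).hasGradientAt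
  have hn := (hasFDerivAt_id a).inner ℝ (hasFDerivAt_id a)
  have hq : HasFDerivAt (fun y : F => μ / 2 * ‖y‖ ^ 2)
      ((μ/2) • ((fderivInnerCLM ℝ (a, a)).comp
        ((ContinuousLinearMap.id ℝ F).prod (ContinuousLinearMap.id ℝ F)))) a := by
    have h2 := hn.const_mul (μ/2)
    have he : (fun y : F => μ / 2 * ‖y‖ ^ 2) = (fun y : F => μ / 2 * ⟪y, y⟫) := by
      funext y; rw [real_inner_self_eq_norm_sq]
    rw [he]
    exact h2
  have key := agf_convex_tangent_le (b := b) hsc (hfa.sub hq)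
  simp only [ContinuousLinearMap.sub_apply, ContinuousLinearMap.smul_apply,
    InnerProductSpace.toDual_apply_apply, fderivInnerCLM_apply, ContinuousLinearMap.comp_apply,
    ContinuousLinearMap.prod_apply, ContinuousLinearMap.coe_id', id_eq, smul_eq_mul] at key
  have e1 : ‖b - a‖ ^ 2 = ‖b‖ ^ 2 - 2 * ⟪a, b⟫ + ‖a‖ ^ 2 := by
    rw [← real_inner_self_eq_norm_sq, ← real_inner_self_eq_norm_sq, ← real_inner_self_eq_norm_sq]
    simp only [inner_sub_left, inner_sub_right, real_inner_comm a b]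
    ring
  have e2 : ⟪a, b - a⟫ = ⟪a, b⟫ - ‖a‖ ^ 2 := by
    rw [inner_sub_right, real_inner_self_eq_norm_sq]
  have e3 : ⟪b - a, a⟫ = ⟪a, b⟫ - ‖a‖ ^ 2 := by
    rw [inner_sub_left, real_inner_self_eq_norm_sq, real_inner_comm]
  rw [e2, e3] at key
  rw [e1]; linarith

/-- purely arithmetic key inequality -/
lemma agf_arith (μ sqm gX gV gS xx xv xs vv vs ss fX fS : ℝ) (hμ : 0 < μ)
    (hsq : sqm ^ 2 = μ) (h0 : 0 ≤ sqm)
    (hconv : fX + (gS - gX) + μ / 2 * (ss - 2 * xs + xx) ≤ fS)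
    (hcs : 0 ≤ xx - 2 * xv + vv) :
    sqm * (gV - gX) + μ / 2 * (2 * sqm * (xv - xs - vv + vs - μ⁻¹ * (gV - gS)))
      ≤ -sqm * (fX - fS + μ / 2 * (vv - 2 * vs + ss)) := by
  have h1 : μ⁻¹ * μ = 1 := inv_mul_cancel₀ hμ.ne'
  have key2 : gS - gX + μ * (xv - xs - vv + vs) ≤ fS - fX - μ / 2 * (vv - 2 * vs + ss) := by
    nlinarith [mul_nonneg hμ.le hcs]
  have hm := mul_le_mul_of_nonneg_left key2 h0
  have e : μ / 2 * (2 * sqm * (xv - xs - vv + vs - μ⁻¹ * (gV - gS)))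
      = μ * sqm * (xv - xs - vv + vs) - sqm * (gV - gS) := by
    field_simp
  rw [e]
  nlinarith [hm]

variable {F : Type*} [NormedAddCommGroup F] [InnerProductSpace ℝ F]

lemma agf_vec (μ sqm : ℝ) (hμ : 0 < μ) (hsq : sqm ^ 2 = μ) (h0 : 0 ≤ sqm)
    (G X V S : F) (fX fS : ℝ)
    (hconv : fX + ⟪G, S - X⟫ + μ / 2 * ‖S - X‖ ^ 2 ≤ fS) :
    ⟪G, sqm • (V - X)⟫ + μ / 2 * (⟪V - S, sqm • (X - V - μ⁻¹ • G)⟫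
        + ⟪sqm • (X - V - μ⁻¹ • G), V - S⟫)
      ≤ -sqm * (fX - fS + μ / 2 * ⟪V - S, V - S⟫) := by
  have hconv' : fX + (⟪G, S⟫ - ⟪G, X⟫) + μ / 2 * (⟪S, S⟫ - 2 * ⟪X, S⟫ + ⟪X, X⟫) ≤ fS := by
    have hSX : ‖S - X‖ ^ 2 = ⟪S, S⟫ - 2 * ⟪X, S⟫ + ⟪X, X⟫ := by
      rw [← real_inner_self_eq_norm_sq]
      simp only [inner_sub_left, inner_sub_right, real_inner_comm S X]
      ring
    rw [hSX, inner_sub_right] at hconv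
    exact hconv
  have hcs' : (0:ℝ) ≤ ⟪X, X⟫ - 2 * ⟪X, V⟫ + ⟪V, V⟫ := by
    have := real_inner_self_nonneg (x := X - V)
    simp only [inner_sub_left, inner_sub_right, real_inner_comm X V] at this
    linarith
  have key := agf_arith μ sqm ⟪G, X⟫ ⟪G, V⟫ ⟪G, S⟫ ⟪X, X⟫ ⟪X, V⟫ ⟪X, S⟫ ⟪V, V⟫ ⟪V, S⟫ ⟪S, S⟫
    fX fS hμ hsq h0 hconv' hcs'
  simp only [inner_sub_left, inner_sub_right, real_inner_smul_left, real_inner_smul_right,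
    smul_eq_mul]
  rw [real_inner_comm X V, real_inner_comm G V, real_inner_comm X S, real_inner_comm V S,
    real_inner_comm G S]
  linarith [key]

/-- Convergence rate of the accelerated gradient flow for `μ`-strongly convex objectives:
`f(x(t)) - f⋆ ≤ e^{-√μ t} (f(x₀) - f⋆ + (μ/2)‖v₀ - x⋆‖²)`. -/
theorem accelerated_gradient_flow_strongly_convex_rate {d : ℕ} (μ : ℝ) (hμ : 0 < μ)
    (f : EuclideanSpace ℝ (Fin d) → ℝ)
    (hf : Differentiable ℝ f)
    (hsc : ConvexOn ℝ Set.univ (fun y => f y - μ / 2 * ‖y‖ ^ 2))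
    (xstar x₀ v₀ : EuclideanSpace ℝ (Fin d))
    (hmin : ∀ y, f xstar ≤ f y)
    (x v : ℝ → EuclideanSpace ℝ (Fin d))
    (hx : ∀ t ≥ (0 : ℝ), HasDerivAt x (Real.sqrt μ • (v t - x t)) t)
    (hv : ∀ t ≥ (0 : ℝ),
      HasDerivAt v (Real.sqrt μ • (x t - v t - μ⁻¹ • gradient f (x t))) t)
    (hx0 : x 0 = x₀) (hv0 : v 0 = v₀) :
    ∀ t ≥ (0 : ℝ), f (x t) - f xstar ≤
      Real.exp (-Real.sqrt μ * t) * (f x₀ - f xstar + μ / 2 * ‖v₀ - xstar‖ ^ 2) := by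
  intro t ht
  set sqm := Real.sqrt μ with hsqm
  have hsq : sqm ^ 2 = μ := Real.sq_sqrt hμ.le
  have h0 : 0 < sqm := Real.sqrt_pos.mpr hμ
  set E : ℝ → ℝ := fun s => f (x s) - f xstar + μ / 2 * ⟪v s - xstar, v s - xstar⟫ with hE
  set D : ℝ → ℝ := fun s => ⟪gradient f (x s), sqm • (v s - x s)⟫
    + μ / 2 * (⟪v s - xstar, sqm • (x s - v s - μ⁻¹ • gradient f (x s))⟫
      + ⟪sqm • (x s - v s - μ⁻¹ • gradient f (x s)), v s - xstar⟫) with hD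
  -- derivative of E
  have hEderiv : ∀ s ≥ (0:ℝ), HasDerivAt E (D s) s := by
    intro s hs
    have h1 : HasDerivAt (fun τ => f (x τ)) ⟪gradient f (x s), sqm • (v s - x s)⟫ s := by
      have hfd : HasFDerivAt f ((InnerProductSpace.toDual ℝ _) (gradient f (x s))) (x s) :=
        hasGradientAt_iff_hasFDerivAt.mp (hf (x s)).hasGradientAt
      have := hfd.comp_hasDerivAt s (hx s hs)
      simpa only [Function.comp_def, InnerProductSpace.toDual_apply_apply] using this
    have hw : HasDerivAt (fun τ => v τ - xstar)
        (sqm • (x s - v s - μ⁻¹ • gradient f (x s))) s := (hv s hs).sub_const xstar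
    have h2 := (hw.inner ℝ hw).const_mul (μ / 2)
    exact (h1.sub_const (f xstar)).add h2
  -- key differential inequality
  have hkey : ∀ s ≥ (0:ℝ), D s ≤ -sqm * E s := by
    intro s _
    have hconv : f (x s) + ⟪gradient f (x s), xstar - x s⟫ + μ / 2 * ‖xstar - x s‖ ^ 2
        ≤ f xstar := agf_strong μ f hf hsc (x s) xstar
    exact agf_vec μ sqm hμ hsq h0.le (gradient f (x s)) (x s) (v s) xstar
      (f (x s)) (f xstar) hconv
  -- Gronwall
  set g : ℝ → ℝ := fun s => Real.exp (sqm * s) * E s with hg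
  have hgderiv : ∀ s ≥ (0:ℝ), HasDerivAt g
      (Real.exp (sqm * s) * (sqm * 1) * E s + Real.exp (sqm * s) * D s) s := by
    intro s hs
    exact (((hasDerivAt_id s).const_mul sqm).exp).mul (hEderiv s hs)
  have hanti : AntitoneOn g (Set.Ici 0) := by
    apply antitoneOn_of_deriv_nonpos (convex_Ici 0)
    · intro s hs
      exact ((hgderiv s hs).continuousAt).continuousWithinAt
    · intro s hs
      rw [interior_Ici] at hs
      exact ((hgderiv s (le_of_lt hs)).differentiableAt).differentiableWithinAt
    · intro s hs
      rw [interior_Ici] at hs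
      rw [(hgderiv s (le_of_lt hs)).deriv]
      have := hkey s (le_of_lt hs)
      have hepos : 0 < Real.exp (sqm * s) := Real.exp_pos _
      nlinarith [mul_le_mul_of_nonneg_left this hepos.le]
  have hgt : g t ≤ g 0 := hanti Set.self_mem_Ici ht ht
  have hg0 : g 0 = f x₀ - f xstar + μ / 2 * ‖v₀ - xstar‖ ^ 2 := by
    simp only [hg, hE, hx0, hv0, mul_zero, Real.exp_zero, one_mul,
      real_inner_self_eq_norm_sq]
  have hEt : f (x t) - f xstar ≤ E t := by
    have : (0:ℝ) ≤ μ / 2 * ⟪v t - xstar, v t - xstar⟫ :=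
      mul_nonneg (by linarith) real_inner_self_nonneg
    simp only [hE]; linarith
  have hexp_pos : 0 < Real.exp (sqm * t) := Real.exp_pos _
  have hfinal : E t ≤ Real.exp (-sqm * t) * (f x₀ - f xstar + μ / 2 * ‖v₀ - xstar‖ ^ 2) := by
    rw [← hg0, neg_mul, Real.exp_neg]
    calc E t = (Real.exp (sqm * t))⁻¹ * g t := by
          show E t = (Real.exp (sqm * t))⁻¹ * (Real.exp (sqm * t) * E t)
          rw [inv_mul_cancel_left₀ hexp_pos.ne']
      _ ≤ (Real.exp (sqm * t))⁻¹ * g 0 :=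
          mul_le_mul_of_nonneg_left hgt (by positivity)
  exact hEt.trans hfinal
end

section
/- Let μ ≥ 0 and L > 0, and let f : ℝ^d → ℝ be a differentiable, L-smooth, μ-strongly convex function. Then for all x, y, z ∈ ℝ^d, f(y) - f(x) ≤ ⟨∇f(z), y - x⟩ + (L/2)‖y - z‖² - (μ/2)‖z - x‖². (That is, the map (y,x) ↦ ∇f(x) is a weak discrete gradient of f with parameters (α, β, γ) = (L/2, μ/2, 0).) -/
open RealInnerProductSpace

section aux

variable {d : ℕ}

/-- Derivative of `f` along a line. -/
lemma line_hasDerivAt (f : EuclideanSpace ℝ (Fin d) → ℝ) (hf : Differentiable ℝ f)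
    (z v : EuclideanSpace ℝ (Fin d)) (t : ℝ) :
    HasDerivAt (fun s : ℝ => f (z + s • v)) ⟪gradient f (z + t • v), v⟫ t := by
  have h1 : HasDerivAt (fun s : ℝ => z + s • v) v t := by
    simpa using ((hasDerivAt_id t).smul_const v).const_add z
  have h2 := (hf (z + t • v)).hasGradientAt
  rw [hasGradientAt_iff_hasFDerivAt] at h2
  have h3 := h2.comp_hasDerivAt t h1
  simpa [InnerProductSpace.toDual_apply_apply, Function.comp_def] using h3

/-- Descent lemma. -/
lemma descent_lemma (L : ℝ) (hL : 0 < L) (f : EuclideanSpace ℝ (Fin d) → ℝ)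
    (hf : Differentiable ℝ f)
    (hsmooth : ∀ x y, ‖gradient f x - gradient f y‖ ≤ L * ‖x - y‖)
    (z y : EuclideanSpace ℝ (Fin d)) :
    f y - f z ≤ ⟪gradient f z, y - z⟫ + L / 2 * ‖y - z‖ ^ 2 := by
  set v := y - z with hv
  set h : ℝ → ℝ := fun t => f (z + t • v) - t * ⟪gradient f z, v⟫ - L / 2 * t ^ 2 * ‖v‖ ^ 2
    with hh
  have hder : ∀ t : ℝ, HasDerivAt h
      (⟪gradient f (z + t • v), v⟫ - ⟪gradient f z, v⟫ - L * t * ‖v‖ ^ 2) t := by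
    intro t
    have h1 := line_hasDerivAt f hf z v t
    have h2 : HasDerivAt (fun s : ℝ => s * ⟪gradient f z, v⟫) ⟪gradient f z, v⟫ t := by
      simpa using (hasDerivAt_id t).mul_const ⟪gradient f z, v⟫
    have h3 : HasDerivAt (fun s : ℝ => L / 2 * s ^ 2 * ‖v‖ ^ 2) (L * t * ‖v‖ ^ 2) t := by
      have := ((hasDerivAt_pow 2 t).const_mul (L / 2)).mul_const (‖v‖ ^ 2)
      convert this using 1
      rfl
      rfl
      ring
    exact (h1.sub h2).sub h3
  have hanti : AntitoneOn h (Set.Icc 0 1) := by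
    apply antitoneOn_of_deriv_nonpos (convex_Icc 0 1)
    · exact fun t _ => ((hder t).continuousAt).continuousWithinAt
    · exact fun t _ => ((hder t).differentiableAt).differentiableWithinAt
    · intro t ht
      rw [interior_Icc, Set.mem_Ioo] at ht
      rw [(hder t).deriv]
      have hcs : ⟪gradient f (z + t • v) - gradient f z, v⟫ ≤
          ‖gradient f (z + t • v) - gradient f z‖ * ‖v‖ := real_inner_le_norm _ _
      have hlip : ‖gradient f (z + t • v) - gradient f z‖ ≤ L * (t * ‖v‖) := by
        have := hsmooth (z + t • v) z
        simpa [norm_smul, abs_of_pos ht.1] using this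
      have hvn : (0 : ℝ) ≤ ‖v‖ := norm_nonneg _
      have := hcs.trans (by nlinarith : ‖gradient f (z + t • v) - gradient f z‖ * ‖v‖ ≤
        L * t * ‖v‖ ^ 2)
      rw [inner_sub_left] at this
      linarith
  have h01 := hanti (Set.left_mem_Icc.2 zero_le_one) (Set.right_mem_Icc.2 zero_le_one) zero_le_one
  simp only [hh] at h01
  have hy : z + (1 : ℝ) • v = y := by simp [hv]
  rw [hy] at h01
  simp only [zero_smul, add_zero, one_pow, one_mul, mul_zero, zero_mul, ne_eq,
    zero_pow, sub_zero] at h01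
  linarith

/-- Gradient inequality for a `μ`-strongly convex function. -/
lemma strong_convex_grad (μ : ℝ) (f : EuclideanSpace ℝ (Fin d) → ℝ)
    (hf : Differentiable ℝ f)
    (hsc : ConvexOn ℝ Set.univ (fun y => f y - μ / 2 * ‖y‖ ^ 2))
    (z x : EuclideanSpace ℝ (Fin d)) :
    ⟪gradient f z, x - z⟫ + μ / 2 * ‖x - z‖ ^ 2 ≤ f x - f z := by
  set v := x - z with hv
  set φ : ℝ → ℝ := fun t => f (z + t • v) - μ / 2 * ‖z + t • v‖ ^ 2 with hφ
  -- φ is convex on ℝ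
  have hφconv : ConvexOn ℝ Set.univ φ := by
    have hcomp := hsc.comp_affineMap (AffineMap.lineMap z x : ℝ →ᵃ[ℝ] EuclideanSpace ℝ (Fin d))
    have heq : ((fun y => f y - μ / 2 * ‖y‖ ^ 2) ∘ (AffineMap.lineMap z x)) = φ := by
      funext t
      simp [φ, AffineMap.lineMap_apply, hv, add_comm]
    rw [Set.preimage_univ, heq] at hcomp
    exact hcomp
  -- derivative of φ at 0
  have hnorm : ∀ t : ℝ, HasDerivAt (fun s : ℝ => ‖z + s • v‖ ^ 2)
      (⟪z + t • v, v⟫ + ⟪v, z + t • v⟫) t := by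
    intro t
    have h1 : HasDerivAt (fun s : ℝ => z + s • v) v t := by
      simpa using ((hasDerivAt_id t).smul_const v).const_add z
    have h2 := h1.inner ℝ h1
    simp only [real_inner_self_eq_norm_sq] at h2
    exact h2
  have hder0 : HasDerivAt φ (⟪gradient f z, v⟫ - μ * ⟪z, v⟫) 0 := by
    have h1 := line_hasDerivAt f hf z v 0
    have h2 := (hnorm 0).const_mul (μ / 2)
    have h3 := h1.sub h2
    simp only [zero_smul, add_zero] at h1 h2 h3
    convert h3 using 1
    rfl
    rfl
    rfl
    rw [real_inner_comm v z]
    ring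
  have hslope := hφconv.le_slope_of_hasDerivAt (Set.mem_univ 0) (Set.mem_univ 1) zero_lt_one hder0
  rw [slope_def_field] at hslope
  simp only [hφ, div_one, sub_zero, zero_smul, add_zero, one_smul] at hslope
  have hx : z + v = x := by simp [hv]
  rw [hx] at hslope
  -- expand ‖x - z‖²
  have hexp : ‖x - z‖ ^ 2 = ‖x‖ ^ 2 - 2 * ⟪z, x⟫ + ‖z‖ ^ 2 := by
    rw [← real_inner_self_eq_norm_sq, ← real_inner_self_eq_norm_sq, ← real_inner_self_eq_norm_sq,
      inner_sub_left, inner_sub_right, inner_sub_right, real_inner_comm x z]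
    ring
  have hzv : ⟪z, v⟫ = ⟪z, x⟫ - ⟪z, z⟫ := by rw [hv, inner_sub_right]
  rw [hzv, real_inner_self_eq_norm_sq] at hslope
  rw [hv] at hslope ⊢
  rw [hexp]
  linarith

end aux

/-- The map `(y,x) ↦ ∇f(x)` is a weak discrete gradient of an `L`-smooth, `μ`-strongly
convex `f` with parameters `(α, β, γ) = (L/2, μ/2, 0)` (three points descent lemma). -/
theorem explicit_euler_weak_discrete_gradient {d : ℕ} (μ L : ℝ) (hμ : 0 ≤ μ) (hL : 0 < L)
    (f : EuclideanSpace ℝ (Fin d) → ℝ)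
    (hf : Differentiable ℝ f)
    (hsmooth : ∀ x y, ‖gradient f x - gradient f y‖ ≤ L * ‖x - y‖)
    (hsc : ConvexOn ℝ Set.univ (fun y => f y - μ / 2 * ‖y‖ ^ 2)) :
    ∀ x y z : EuclideanSpace ℝ (Fin d),
      f y - f x ≤ ⟪gradient f z, y - x⟫ + L / 2 * ‖y - z‖ ^ 2 - μ / 2 * ‖z - x‖ ^ 2 := by
  intro x y z
  have h1 := descent_lemma L hL f hf hsmooth z y
  have h2 := strong_convex_grad μ f hf hsc z x
  have h3 : ⟪gradient f z, y - z⟫ - ⟪gradient f z, x - z⟫ = ⟪gradient f z, y - x⟫ := by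
    rw [← inner_sub_right]
    congr 1
    abel
  have hxz : ‖x - z‖ = ‖z - x‖ := by rw [← neg_sub, norm_neg]
  rw [hxz] at h2
  linarith
end

section
/- Let 0 < μ ≤ L and let f : ℝ^d → ℝ be a differentiable, L-smooth, μ-strongly convex function. Define the Gonzalez discrete gradient, for y ≠ z, by ∇_G f(y,z) = ∇f((y+z)/2) + [(f(y) - f(z) - ⟨∇f((y+z)/2), y-z⟩)/‖y-z‖²] (y - z). Then for all x, y, z ∈ ℝ^d with y ≠ z, f(y) - f(x) ≤ ⟨∇_G f(y,z), y - x⟩ + ((L+μ)/8 + (L-μ)²/(16μ))‖y - z‖² - (μ/4)‖z - x‖². (That is, ∇_G f is a weak discrete gradient of f with parameters (α, β, γ) = ((L+μ)/8 + (L-μ)²/(16μ), μ/4, 0).) -/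
set_option maxHeartbeats 1000000

open RealInnerProductSpace

section helpers

variable {d : ℕ}

private lemma inner_gradient (f : EuclideanSpace ℝ (Fin d) → ℝ) (p v : EuclideanSpace ℝ (Fin d)) :
    ⟪gradient f p, v⟫ = (fderiv ℝ f p) v :=
  InnerProductSpace.toDual_symm_apply

private lemma hasDerivAt_line (f : EuclideanSpace ℝ (Fin d) → ℝ) (hf : Differentiable ℝ f)
    (a v : EuclideanSpace ℝ (Fin d)) (t : ℝ) :
    HasDerivAt (fun s : ℝ => f (a + s • v)) ⟪gradient f (a + t • v), v⟫ t := by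
  have hc : HasDerivAt (fun s : ℝ => a + s • v) v t := by
    simpa using ((hasDerivAt_id t).smul_const v).const_add a
  have := (hf (a + t • v)).hasFDerivAt.comp_hasDerivAt t hc
  rw [inner_gradient]
  simpa [Function.comp_def] using this

private lemma sc_bound (μ : ℝ) (f : EuclideanSpace ℝ (Fin d) → ℝ) (hf : Differentiable ℝ f)
    (hsc : ConvexOn ℝ Set.univ (fun y => f y - μ / 2 * ‖y‖ ^ 2))
    (a b : EuclideanSpace ℝ (Fin d)) :
    f a + ⟪gradient f a, b - a⟫ + μ / 2 * ‖b - a‖ ^ 2 ≤ f b := by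
  set φ : ℝ → ℝ := fun t => f (a + t • (b - a)) - μ / 2 * ‖a + t • (b - a)‖ ^ 2 with hφ
  have hconv : ConvexOn ℝ Set.univ φ := by
    have h := hsc.comp_affineMap (AffineMap.lineMap a b)
    have heq : ((fun y => f y - μ / 2 * ‖y‖ ^ 2) ∘ (AffineMap.lineMap a b : ℝ →ᵃ[ℝ] _)) = φ := by
      funext t
      simp [hφ, AffineMap.lineMap_apply_module', add_comm]
    rw [heq] at h
    simpa using h
  have hc : HasDerivAt (fun s : ℝ => a + s • (b - a)) (b - a) 0 := by
    simpa using ((hasDerivAt_id (0:ℝ)).smul_const (b - a)).const_add a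
  have hd2 : HasDerivAt (fun s : ℝ => ‖a + s • (b - a)‖ ^ 2) (2 * ⟪a, b - a⟫) 0 := by
    have h := HasDerivAt.inner ℝ hc hc
    simp only [zero_smul, add_zero] at h
    have : (fun s : ℝ => (⟪a + s • (b - a), a + s • (b - a)⟫ : ℝ)) =
        fun s : ℝ => ‖a + s • (b - a)‖ ^ 2 := by
      funext s; rw [real_inner_self_eq_norm_sq]
    rw [this] at h
    refine h.congr_deriv ?_
    rw [real_inner_comm]; ring
  have hd1 := hasDerivAt_line f hf a (b - a) 0
  simp only [zero_smul, add_zero] at hd1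
  have hdφ : HasDerivAt φ (⟪gradient f a, b - a⟫ - μ * ⟪a, b - a⟫) 0 := by
    have := hd1.sub (hd2.const_mul (μ / 2))
    refine this.congr_deriv ?_
    ring
  have hs := hconv.le_slope_of_hasDerivAt (Set.mem_univ (0:ℝ)) (Set.mem_univ (1:ℝ)) one_pos hdφ
  rw [slope_def_field] at hs
  simp only [hφ, one_smul, zero_smul, add_zero, add_sub_cancel] at hs
  have hexp : ⟪a, b - a⟫ = ⟪a, b⟫ - ‖a‖ ^ 2 := by
    rw [inner_sub_right, real_inner_self_eq_norm_sq]
  have hnorm : ‖b - a‖ ^ 2 = ‖b‖ ^ 2 - 2 * ⟪b, a⟫ + ‖a‖ ^ 2 := norm_sub_sq_real b a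
  have hcomm : ⟪b, a⟫ = ⟪a, b⟫ := real_inner_comm a b
  have hs' : ⟪gradient f a, b - a⟫ - μ * ⟪a, b - a⟫ ≤
      (f b - μ / 2 * ‖b‖ ^ 2 - (f a - μ / 2 * ‖a‖ ^ 2)) / (1 - 0) := hs
  rw [hexp] at hs'
  rw [hnorm, hcomm]
  have : (f b - μ / 2 * ‖b‖ ^ 2 - (f a - μ / 2 * ‖a‖ ^ 2)) / (1 - 0)
      = f b - μ / 2 * ‖b‖ ^ 2 - (f a - μ / 2 * ‖a‖ ^ 2) := by norm_num
  rw [this] at hs'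
  nlinarith [hs']

private lemma descent (L : ℝ) (f : EuclideanSpace ℝ (Fin d) → ℝ) (hf : Differentiable ℝ f)
    (hsmooth : ∀ x y, ‖gradient f x - gradient f y‖ ≤ L * ‖x - y‖)
    (a b : EuclideanSpace ℝ (Fin d)) :
    f b ≤ f a + ⟪gradient f a, b - a⟫ + L / 2 * ‖b - a‖ ^ 2 := by
  set v := b - a with hv
  set ψ : ℝ → ℝ := fun t => f (a + t • v) - t * ⟪gradient f a, v⟫ - t ^ 2 * (L / 2 * ‖v‖ ^ 2)
    with hψ
  have hdψ : ∀ t : ℝ, HasDerivAt ψ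
      (⟪gradient f (a + t • v), v⟫ - ⟪gradient f a, v⟫ - 2 * t * (L / 2 * ‖v‖ ^ 2)) t := by
    intro t
    have h1 := hasDerivAt_line f hf a v t
    have h2 : HasDerivAt (fun s : ℝ => s * ⟪gradient f a, v⟫) ⟪gradient f a, v⟫ t := by
      simpa using (hasDerivAt_id t).mul_const (⟪gradient f a, v⟫ : ℝ)
    have h3 : HasDerivAt (fun s : ℝ => s ^ 2 * (L / 2 * ‖v‖ ^ 2))
        (2 * t * (L / 2 * ‖v‖ ^ 2)) t := by
      have := (hasDerivAt_pow 2 t).mul_const (L / 2 * ‖v‖ ^ 2)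
      simpa [mul_comm] using this
    exact (h1.sub h2).sub h3
  have hanti : AntitoneOn ψ (Set.Icc 0 1) := by
    apply antitoneOn_of_deriv_nonpos (convex_Icc 0 1)
    · exact fun t _ => (hdψ t).continuousAt.continuousWithinAt
    · exact fun t _ => (hdψ t).differentiableAt.differentiableWithinAt
    · intro t ht
      rw [interior_Icc] at ht
      rw [(hdψ t).deriv]
      have hCS : ⟪gradient f (a + t • v) - gradient f a, v⟫
          ≤ ‖gradient f (a + t • v) - gradient f a‖ * ‖v‖ := real_inner_le_norm _ _
      rw [inner_sub_left] at hCS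
      have hlip := hsmooth (a + t • v) a
      have hnorm : ‖a + t • v - a‖ = t * ‖v‖ := by
        rw [add_sub_cancel_left, norm_smul, Real.norm_eq_abs, abs_of_pos ht.1]
      rw [hnorm] at hlip
      nlinarith [mul_le_mul_of_nonneg_right hlip (norm_nonneg v), norm_nonneg v,
        sq_nonneg ‖v‖]
  have h01 := hanti (Set.left_mem_Icc.mpr zero_le_one) (Set.right_mem_Icc.mpr zero_le_one)
    zero_le_one
  simp only [hψ, zero_smul, add_zero, one_smul, zero_mul, sub_zero, one_pow, one_mul,
    zero_pow, mul_zero] at h01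
  have hab : a + v = b := by rw [hv]; abel
  rw [hab] at h01
  linarith

private lemma scalar_key (μ L n2 U P D : ℝ) (hμ : 0 < μ) (hμL : μ ≤ L) (hn2 : 0 < n2)
    (hU : 0 ≤ U) (hCS : P ^ 2 ≤ n2 * U)
    (hD1 : D ≤ (L - μ) / 8 * n2) (hD2 : -((L - μ) / 8 * n2) ≤ D) :
    L / 8 * n2 - μ / 2 * (U - P + 4⁻¹ * n2) ≤
      D / n2 * (n2 - P) + ((L + μ) / 8 + (L - μ) ^ 2 / (16 * μ)) * n2 - μ / 4 * U := by
  set r := D / n2 with hr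
  set E := (L - μ) ^ 2 / (16 * μ) with hEdef
  have hE : (L - μ) ^ 2 = 16 * μ * E := by
    rw [hEdef]; field_simp
  have hr1 : r ≤ (L - μ) / 8 := by
    rw [hr, div_le_iff₀ hn2]; linarith
  have hr2 : -((L - μ) / 8) ≤ r := by
    rw [hr, le_div_iff₀ hn2]; linarith
  have hprod : 0 ≤ ((L - μ) / 8 - r) * ((L - μ) / 8 + r) := by
    apply mul_nonneg <;> linarith
  nlinarith [sq_nonneg ((r + μ / 2) * n2 - μ / 2 * P),
    mul_nonneg (sq_nonneg μ) (sub_nonneg.2 hCS),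
    mul_nonneg hprod (mul_pos hn2 hn2).le,
    mul_pos hμ hn2, mul_pos hn2 hn2, hμ.le, hn2.le, hE]

end helpers

/-- The Gonzalez discrete gradient is a weak discrete gradient of an `L`-smooth,
`μ`-strongly convex `f` with parameters `(α, β, γ) = ((L+μ)/8 + (L-μ)²/(16μ), μ/4, 0)`. -/
theorem gonzalez_weak_discrete_gradient {d : ℕ} (μ L : ℝ) (hμ : 0 < μ) (hμL : μ ≤ L)
    (f : EuclideanSpace ℝ (Fin d) → ℝ)
    (hf : Differentiable ℝ f)
    (hsmooth : ∀ x y, ‖gradient f x - gradient f y‖ ≤ L * ‖x - y‖)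
    (hsc : ConvexOn ℝ Set.univ (fun y => f y - μ / 2 * ‖y‖ ^ 2)) :
    ∀ x y z : EuclideanSpace ℝ (Fin d), y ≠ z →
      f y - f x ≤
        ⟪gradient f ((2:ℝ)⁻¹ • (y + z)) +
            ((f y - f z - ⟪gradient f ((2:ℝ)⁻¹ • (y + z)), y - z⟫) / ‖y - z‖ ^ 2) • (y - z),
          y - x⟫
        + ((L + μ) / 8 + (L - μ) ^ 2 / (16 * μ)) * ‖y - z‖ ^ 2 - μ / 4 * ‖z - x‖ ^ 2 := by
  intro x y z hyz
  have hdes := descent L f hf hsmooth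
  have hscb := sc_bound μ f hf hsc
  set m := (2:ℝ)⁻¹ • (y + z) with hm
  set w := y - z with hw
  set g := gradient f m with hg
  have hw0 : w ≠ 0 := sub_ne_zero.mpr hyz
  have hn2 : (0:ℝ) < ‖w‖ ^ 2 := pow_pos (norm_pos_iff.mpr hw0) 2
  have hym : y - m = (2:ℝ)⁻¹ • w := by rw [hm, hw]; module
  have hzm : z - m = -((2:ℝ)⁻¹ • w) := by rw [hm, hw]; module
  have hxm : x - m = (x - z) - (2:ℝ)⁻¹ • w := by rw [hm, hw]; module
  have hyx : y - x = w - (x - z) := by rw [hw]; abel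
  have hnym : ‖y - m‖ ^ 2 = 4⁻¹ * ‖w‖ ^ 2 := by
    rw [hym, norm_smul, mul_pow, Real.norm_eq_abs]; norm_num
  have hnzm : ‖z - m‖ ^ 2 = 4⁻¹ * ‖w‖ ^ 2 := by
    rw [hzm, norm_neg, norm_smul, mul_pow, Real.norm_eq_abs]; norm_num
  have hgym : ⟪g, y - m⟫ = 2⁻¹ * ⟪g, w⟫ := by rw [hym, real_inner_smul_right]
  have hgzm : ⟪g, z - m⟫ = -(2⁻¹ * ⟪g, w⟫) := by
    rw [hzm, inner_neg_right, real_inner_smul_right]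
  have hgxm : ⟪g, x - m⟫ = ⟪g, x - z⟫ - 2⁻¹ * ⟪g, w⟫ := by
    rw [hxm, inner_sub_right, real_inner_smul_right]
  have hnxm : ‖x - m‖ ^ 2 = ‖x - z‖ ^ 2 - ⟪x - z, w⟫ + 4⁻¹ * ‖w‖ ^ 2 := by
    rw [hxm, norm_sub_sq_real, real_inner_smul_right, norm_smul, mul_pow, Real.norm_eq_abs]
    norm_num; ring
  have h1 := hdes m y
  rw [hgym, hnym] at h1
  have h4 := hdes m z
  rw [hgzm, hnzm] at h4
  have h3 := hscb m y
  rw [hgym, hnym] at h3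
  have h2 := hscb m z
  rw [hgzm, hnzm] at h2
  have h5 := hscb m x
  rw [hgxm, hnxm] at h5
  have hCS : ⟪x - z, w⟫ ^ 2 ≤ ‖w‖ ^ 2 * ‖x - z‖ ^ 2 := by
    have h := abs_real_inner_le_norm (x - z) w
    have h2 := abs_nonneg (⟪x - z, w⟫ : ℝ)
    nlinarith [sq_abs (⟪x - z, w⟫ : ℝ), norm_nonneg (x - z), norm_nonneg w]
  have hinner : ⟪g + ((f y - f z - ⟪g, w⟫) / ‖w‖ ^ 2) • w, y - x⟫
      = ⟪g, w⟫ - ⟪g, x - z⟫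
        + (f y - f z - ⟪g, w⟫) / ‖w‖ ^ 2 * (‖w‖ ^ 2 - ⟪x - z, w⟫) := by
    have e1 : (⟪w, w - (x - z)⟫ : ℝ) = ‖w‖ ^ 2 - ⟪x - z, w⟫ := by
      rw [inner_sub_right, real_inner_self_eq_norm_sq, real_inner_comm w (x - z)]
    have e2 : (⟪g, w - (x - z)⟫ : ℝ) = ⟪g, w⟫ - ⟪g, x - z⟫ := inner_sub_right _ _ _
    rw [inner_add_left, real_inner_smul_left, hyx, e1, e2]
  rw [hinner, norm_sub_rev z x]
  have hD1 : f y - f z - ⟪g, w⟫ ≤ (L - μ) / 8 * ‖w‖ ^ 2 := by linarith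
  have hD2 : -((L - μ) / 8 * ‖w‖ ^ 2) ≤ f y - f z - ⟪g, w⟫ := by linarith
  have hkey := scalar_key μ L (‖w‖ ^ 2) (‖x - z‖ ^ 2) (⟪x - z, w⟫) (f y - f z - ⟪g, w⟫)
    hμ hμL hn2 (by positivity) hCS hD1 hD2
  linarith
end

section
/- Let f : ℝ^d → ℝ be a differentiable convex function with global minimizer x⋆ and minimum value f⋆ = f(x⋆). Let g be a weak discrete gradient of f with parameters (α, β, γ) satisfying β ≥ 0 and γ ≥ 0. Let h > 0 satisfy 2αh ≤ 1, and let (x_k)_{k≥0} ⊆ ℝ^d satisfy the implicit scheme x_{k+1} - x_k = -h · g(x_{k+1}, x_k) with x_0 = x₀. Then for every k ≥ 1, f(x_k) - f⋆ ≤ ‖x₀ - x⋆‖² / (2kh). -/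
open RealInnerProductSpace

/-- A weak discrete gradient of `f` with parameters `(α, β, γ)`. -/
def IsWeakDiscreteGradient {d : ℕ} (f : EuclideanSpace ℝ (Fin d) → ℝ)
    (g : EuclideanSpace ℝ (Fin d) → EuclideanSpace ℝ (Fin d) → EuclideanSpace ℝ (Fin d))
    (α β γ : ℝ) : Prop :=
  0 ≤ α ∧ 0 ≤ β + γ ∧ (∀ x, g x x = gradient f x) ∧
    ∀ x y z : EuclideanSpace ℝ (Fin d),
      f y - f x ≤ ⟪g y z, y - x⟫ + α * ‖y - z‖ ^ 2 - β * ‖z - x‖ ^ 2 - γ * ‖y - x‖ ^ 2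

/-- Convergence rate of the abstract weak discrete gradient method for convex objectives:
`f(x_k) - f⋆ ≤ ‖x₀ - x⋆‖² / (2kh)` under the step size condition `2αh ≤ 1`. -/
theorem weak_DG_method_convex_rate {d : ℕ}
    (f : EuclideanSpace ℝ (Fin d) → ℝ)
    (hf : Differentiable ℝ f)
    (hconv : ConvexOn ℝ Set.univ f)
    (xstar x₀ : EuclideanSpace ℝ (Fin d))
    (hmin : ∀ y, f xstar ≤ f y)
    (g : EuclideanSpace ℝ (Fin d) → EuclideanSpace ℝ (Fin d) → EuclideanSpace ℝ (Fin d))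
    (α β γ : ℝ) (hg : IsWeakDiscreteGradient f g α β γ) (hβ : 0 ≤ β) (hγ : 0 ≤ γ)
    (h : ℝ) (hh : 0 < h) (hstep : 2 * α * h ≤ 1)
    (x : ℕ → EuclideanSpace ℝ (Fin d))
    (hscheme : ∀ k : ℕ, x (k + 1) - x k = -(h • g (x (k + 1)) (x k)))
    (hx0 : x 0 = x₀) :
    ∀ k : ℕ, 1 ≤ k → f (x k) - f xstar ≤ ‖x₀ - xstar‖ ^ 2 / (2 * k * h) := by
  obtain ⟨hα, hβγ, hgg, hineq⟩ := hg
  have hi : (0:ℝ) < h⁻¹ := by positivity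
  have hinv : h * h⁻¹ = 1 := mul_inv_cancel₀ hh.ne'
  have hαh : 2 * α ≤ h⁻¹ := by nlinarith
  have hg' : ∀ k : ℕ, g (x (k + 1)) (x k) = h⁻¹ • (x k - x (k + 1)) := by
    intro k
    have h1 : h • g (x (k + 1)) (x k) = x k - x (k + 1) := by
      have h2 : x (k + 1) - x k = -(h • g (x (k + 1)) (x k)) := hscheme k
      rw [← neg_eq_iff_eq_neg] at h2
      rw [← h2]; abel
    have := congrArg (fun v => h⁻¹ • v) h1
    simpa [smul_smul, inv_mul_cancel₀ hh.ne'] using this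
  -- descent
  have hdesc : ∀ k : ℕ, f (x (k + 1)) ≤ f (x k) := by
    intro k
    have H := hineq (x k) (x (k + 1)) (x k)
    rw [hg' k, real_inner_smul_left] at H
    have hip : ⟪x k - x (k + 1), x (k + 1) - x k⟫ = -‖x (k + 1) - x k‖ ^ 2 := by
      rw [show x k - x (k + 1) = -(x (k + 1) - x k) by abel, inner_neg_left,
        real_inner_self_eq_norm_sq]
    rw [hip] at H
    have hnz : ‖x k - x k‖ ^ 2 = 0 := by simp
    have hn1 : (0:ℝ) ≤ ‖x (k + 1) - x k‖ ^ 2 := by positivity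
    have h5 : α * ‖x (k + 1) - x k‖ ^ 2 ≤ h⁻¹ * ‖x (k + 1) - x k‖ ^ 2 := by
      apply mul_le_mul_of_nonneg_right _ hn1; linarith
    nlinarith [mul_nonneg hγ hn1]
  -- one step bound
  have hstep1 : ∀ k : ℕ, f (x (k + 1)) - f xstar ≤
      (‖x k - xstar‖ ^ 2 - ‖x (k + 1) - xstar‖ ^ 2) / (2 * h) := by
    intro k
    have H := hineq xstar (x (k + 1)) (x k)
    rw [hg' k, real_inner_smul_left] at H
    have hip : ⟪x k - x (k + 1), x (k + 1) - xstar⟫ =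
        (‖x k - xstar‖ ^ 2 - ‖x (k + 1) - xstar‖ ^ 2 - ‖x (k + 1) - x k‖ ^ 2) / 2 := by
      have e1 := norm_sub_sq_real (x k - xstar) (x (k + 1) - xstar)
      have e2 : (x k - xstar) - (x (k + 1) - xstar) = x k - x (k + 1) := by abel
      have e3 : ‖x k - x (k + 1)‖ = ‖x (k + 1) - x k‖ := norm_sub_rev _ _
      rw [e2, e3] at e1
      have e4 : ⟪x k - x (k + 1), x (k + 1) - xstar⟫ =
          ⟪x k - xstar, x (k + 1) - xstar⟫ - ‖x (k + 1) - xstar‖ ^ 2 := by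
        rw [show x k - x (k + 1) = (x k - xstar) - (x (k + 1) - xstar) by abel,
          inner_sub_left, real_inner_self_eq_norm_sq]
      linarith
    rw [hip] at H
    have hn1 : (0:ℝ) ≤ ‖x (k + 1) - x k‖ ^ 2 := by positivity
    have hn2 : (0:ℝ) ≤ ‖x k - xstar‖ ^ 2 := by positivity
    have hn3 : (0:ℝ) ≤ ‖x (k + 1) - xstar‖ ^ 2 := by positivity
    have key : h⁻¹ * ((‖x k - xstar‖ ^ 2 - ‖x (k + 1) - xstar‖ ^ 2 - ‖x (k + 1) - x k‖ ^ 2) / 2)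
        + α * ‖x (k + 1) - x k‖ ^ 2
        ≤ (‖x k - xstar‖ ^ 2 - ‖x (k + 1) - xstar‖ ^ 2) / (2 * h) := by
      rw [le_div_iff₀ (by positivity)]
      nlinarith [mul_le_mul_of_nonneg_right hstep hn1]
    nlinarith [mul_nonneg hβ hn2, mul_nonneg hγ hn3]
  -- summation by induction
  have hsum : ∀ k : ℕ, (k : ℝ) * (f (x k) - f xstar) ≤
      (‖x 0 - xstar‖ ^ 2 - ‖x k - xstar‖ ^ 2) / (2 * h) := by
    intro k
    induction k with
    | zero => simp
    | succ k ih =>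
      have h1 := hstep1 k
      have h2 := hdesc k
      have hk0 : (0:ℝ) ≤ (k : ℝ) := Nat.cast_nonneg k
      have h4 : (k : ℝ) * (f (x (k + 1)) - f xstar) ≤ (k : ℝ) * (f (x k) - f xstar) := by
        apply mul_le_mul_of_nonneg_left _ hk0; linarith
      have hdiv : (‖x 0 - xstar‖ ^ 2 - ‖x k - xstar‖ ^ 2) / (2 * h)
          + (‖x k - xstar‖ ^ 2 - ‖x (k + 1) - xstar‖ ^ 2) / (2 * h)
          = (‖x 0 - xstar‖ ^ 2 - ‖x (k + 1) - xstar‖ ^ 2) / (2 * h) := by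
        field_simp
        ring
      have expand : ((k : ℝ) + 1) * (f (x (k + 1)) - f xstar)
          = (k : ℝ) * (f (x (k + 1)) - f xstar) + (f (x (k + 1)) - f xstar) := by ring
      push_cast
      rw [expand]
      linarith
  intro k hk
  have h1 := hsum k
  have hk0 : (0:ℝ) < (k : ℝ) := by exact_mod_cast hk
  have hn : (0:ℝ) ≤ ‖x k - xstar‖ ^ 2 := by positivity
  rw [← hx0, le_div_iff₀ (by positivity)]
  rw [le_div_iff₀ (by positivity)] at h1
  nlinarith
end

section
/- Let f : ℝ^d → ℝ be a differentiable strongly convex function with global minimizer x⋆ and minimum value f⋆ = f(x⋆). Let g be a weak discrete gradient of f with parameters (α, β, γ) satisfying β + γ > 0. Let h > 0 satisfy h(α + β) ≤ 1, and let (x_k)_{k≥0} ⊆ ℝ^d satisfy the implicit scheme x_{k+1} - x_k = -h · g(x_{k+1}, x_k) with x_0 = x₀. Then for every k ≥ 0, f(x_k) - f⋆ ≤ (1 - 2(β+γ)h/(1 + 2γh))^k · ( f(x₀) - f⋆ + (β+γ)‖x₀ - x⋆‖² ). -/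
open RealInnerProductSpace

set_option maxHeartbeats 1000000 in
/-- Convergence rate of the abstract weak discrete gradient method for strongly convex
objectives: a linear rate `(1 - 2(β+γ)h/(1+2γh))^k` under the step size condition
`h(α+β) ≤ 1`. -/
theorem weak_DG_method_strongly_convex_rate {d : ℕ}
    (f : EuclideanSpace ℝ (Fin d) → ℝ)
    (hf : Differentiable ℝ f)
    (hsc : ∃ μ : ℝ, 0 < μ ∧ ConvexOn ℝ Set.univ (fun y => f y - μ / 2 * ‖y‖ ^ 2))
    (xstar x₀ : EuclideanSpace ℝ (Fin d))
    (hmin : ∀ y, f xstar ≤ f y)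
    (g : EuclideanSpace ℝ (Fin d) → EuclideanSpace ℝ (Fin d) → EuclideanSpace ℝ (Fin d))
    (α β γ : ℝ) (hg : IsWeakDiscreteGradient f g α β γ) (hβγ : 0 < β + γ)
    (h : ℝ) (hh : 0 < h) (hstep : h * (α + β) ≤ 1)
    (x : ℕ → EuclideanSpace ℝ (Fin d))
    (hscheme : ∀ k : ℕ, x (k + 1) - x k = -(h • g (x (k + 1)) (x k)))
    (hx0 : x 0 = x₀) :
    ∀ k : ℕ, f (x k) - f xstar ≤
      (1 - 2 * (β + γ) * h / (1 + 2 * γ * h)) ^ k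
        * (f x₀ - f xstar + (β + γ) * ‖x₀ - xstar‖ ^ 2) := by
  obtain ⟨hα, hβγ0, hgrad, hwdg⟩ := hg
  rcases Nat.eq_zero_or_pos d with hd | hd
  · subst hd
    intro k
    have h1 : x k = xstar := Subsingleton.elim _ _
    have h2 : x₀ = xstar := Subsingleton.elim _ _
    rw [h1, h2]
    simp
  · -- d ≥ 1 : first derive β ≤ α
    have hαβ : β ≤ α := by
      set z : EuclideanSpace ℝ (Fin d) := EuclideanSpace.single ⟨0, hd⟩ (1:ℝ) with hzdef
      have hz : ‖z‖ = 1 := by simp [hzdef]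
      have h0 := hwdg 0 0 z
      simp only [sub_self, inner_zero_right, norm_zero, zero_sub, norm_neg, sub_zero] at h0
      rw [hz] at h0
      nlinarith [h0]
    have h2h : (0:ℝ) < 2*h := by linarith
    have hnum : 0 ≤ 1 - 2*β*h := by nlinarith
    have hD : 0 < 1 + 2*γ*h := by nlinarith
    set ρ : ℝ := (1 - 2*β*h)/(1 + 2*γ*h) with hρdef
    have hρ0 : 0 ≤ ρ := div_nonneg hnum hD.le
    have hρeq : 1 - 2 * (β + γ) * h / (1 + 2 * γ * h) = ρ := by
      rw [hρdef]; field_simp; ring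
    have key : ∀ k, f (x (k+1)) - f xstar + (β+γ) * ‖x (k+1) - xstar‖^2 ≤
        ρ * (f (x k) - f xstar + (β+γ) * ‖x k - xstar‖^2) := by
      intro k
      set a := x k with ha
      set b := x (k+1) with hb
      set G := g b a with hGdef
      have hG : h • G = a - b := by
        have hs := hscheme k
        rw [← neg_sub b a, hs, neg_neg]
      have e1 : h * ⟪G, b - a⟫ = -‖b - a‖^2 := by
        rw [← real_inner_smul_left, hG, ← neg_sub b a, inner_neg_left,
          real_inner_self_eq_norm_sq]
      have e2 : h * ⟪G, b - xstar⟫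
          = -(‖b - a‖^2 + ‖b - xstar‖^2 - ‖a - xstar‖^2)/2 := by
        have expand := @norm_sub_sq_real (EuclideanSpace ℝ (Fin d)) _ _ (b - xstar) (b - a)
        have habc : (b - xstar) - (b - a) = a - xstar := by abel
        rw [habc] at expand
        have e3 : h * ⟪G, b - xstar⟫ = -⟪b - xstar, b - a⟫ := by
          rw [← real_inner_smul_left, hG, ← neg_sub b a, inner_neg_left, real_inner_comm]
        rw [e3]
        linarith [expand]
      have h1 := hwdg a b a
      have h2 := hwdg xstar b a
      simp only [sub_self, norm_zero] at h1
      have f1 : h * (f b - f a) ≤ (h*α - h*γ) * ‖b - a‖^2 - ‖b - a‖^2 := by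
        nlinarith [mul_le_mul_of_nonneg_left h1 hh.le, e1]
      have f2 : 2*h*(f b - f xstar) ≤ -(‖b - a‖^2 + ‖b - xstar‖^2 - ‖a - xstar‖^2)
          + 2*h*(α * ‖b - a‖^2 - β * ‖a - xstar‖^2 - γ * ‖b - xstar‖^2) := by
        nlinarith [mul_le_mul_of_nonneg_left h2 h2h.le, e2]
      rw [hρdef, div_mul_eq_mul_div, le_div_iff₀ hD]
      have c1 : 0 ≤ 2*(1 - 2*β*h) := by linarith
      have c2 : 0 ≤ 2*(β+γ)*h := by nlinarith
      have t1 := mul_le_mul_of_nonneg_left f1 c1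
      have t2 := mul_le_mul_of_nonneg_left f2 c2
      have q1 : 0 ≤ (1 - h*(α+β)) * ‖b - a‖^2 :=
        mul_nonneg (by linarith) (sq_nonneg _)
      have q2 := mul_nonneg hD.le q1
      have final : 2*h * ((f b - f xstar + (β+γ) * ‖b - xstar‖^2) * (1 + 2*γ*h))
          ≤ 2*h * ((1 - 2*β*h) * (f a - f xstar + (β+γ) * ‖a - xstar‖^2)) := by
        linarith [t1, t2, q2]
      exact le_of_mul_le_mul_left final h2h
    have bound : ∀ k, f (x k) - f xstar + (β+γ) * ‖x k - xstar‖^2 ≤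
        ρ^k * (f (x 0) - f xstar + (β+γ) * ‖x 0 - xstar‖^2) := by
      intro k
      induction k with
      | zero => simp
      | succ n ih =>
        calc f (x (n+1)) - f xstar + (β+γ) * ‖x (n+1) - xstar‖^2
            ≤ ρ * (f (x n) - f xstar + (β+γ) * ‖x n - xstar‖^2) := key n
          _ ≤ ρ * (ρ^n * (f (x 0) - f xstar + (β+γ) * ‖x 0 - xstar‖^2)) :=
              mul_le_mul_of_nonneg_left ih hρ0
          _ = ρ^(n+1) * (f (x 0) - f xstar + (β+γ) * ‖x 0 - xstar‖^2) := by ring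
    intro k
    rw [hρeq]
    have hB : 0 ≤ (β+γ) * ‖x k - xstar‖^2 := mul_nonneg hβγ.le (sq_nonneg _)
    have hb := bound k
    rw [hx0] at hb
    linarith
end

section
/- Let f : ℝ^d → ℝ be a differentiable convex function with global minimizer x⋆ and minimum value f⋆ = f(x⋆). Let g be a weak discrete gradient of f with parameters (α, β, γ) satisfying β ≥ 0 and γ ≥ 0. Let h > 0 satisfy 2αh² ≤ 1, set A_k = (kh)², and let sequences (x_k), (v_k), (z_k) ⊆ ℝ^d satisfy, for all k ≥ 0: A_k (x_{k+1} - x_k) = (A_{k+1} - A_k)(v_{k+1} - x_{k+1}); v_{k+1} - v_k = -((A_{k+1} - A_k)/4) · g(x_{k+1}, z_k); A_{k+1}(z_k - x_k) = (A_{k+1} - A_k)(v_k - x_k); with x_0 = v_0 = x₀. Then for every k ≥ 1, f(x_k) - f⋆ ≤ 2‖x₀ - x⋆‖² / (kh)². -/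
open RealInnerProductSpace

set_option maxHeartbeats 2000000 in
/-- Convergence rate of the accelerated abstract weak discrete gradient method for convex
objectives: with `A_k = (kh)²` and `v₀ = x₀`, `f(x_k) - f⋆ ≤ 2‖x₀ - x⋆‖²/(kh)²` under the
step size condition `2αh² ≤ 1`. -/
theorem weak_DG_accelerated_method_convex_rate {d : ℕ}
    (f : EuclideanSpace ℝ (Fin d) → ℝ)
    (hf : Differentiable ℝ f)
    (hconv : ConvexOn ℝ Set.univ f)
    (xstar x₀ : EuclideanSpace ℝ (Fin d))
    (hmin : ∀ y, f xstar ≤ f y)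
    (g : EuclideanSpace ℝ (Fin d) → EuclideanSpace ℝ (Fin d) → EuclideanSpace ℝ (Fin d))
    (α β γ : ℝ) (hg : IsWeakDiscreteGradient f g α β γ) (hβ : 0 ≤ β) (hγ : 0 ≤ γ)
    (h : ℝ) (hh : 0 < h) (hstep : 2 * α * h ^ 2 ≤ 1)
    (A : ℕ → ℝ) (hA : ∀ k : ℕ, A k = ((k : ℝ) * h) ^ 2)
    (x v z : ℕ → EuclideanSpace ℝ (Fin d))
    (hschemex : ∀ k : ℕ,
      A k • (x (k + 1) - x k) = (A (k + 1) - A k) • (v (k + 1) - x (k + 1)))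
    (hschemev : ∀ k : ℕ,
      v (k + 1) - v k = -(((A (k + 1) - A k) / 4) • g (x (k + 1)) (z k)))
    (hschemez : ∀ k : ℕ,
      A (k + 1) • (z k - x k) = (A (k + 1) - A k) • (v k - x k))
    (hx0 : x 0 = x₀) (hv0 : v 0 = x₀) :
    ∀ k : ℕ, 1 ≤ k → f (x k) - f xstar ≤ 2 * ‖x₀ - xstar‖ ^ 2 / ((k : ℝ) * h) ^ 2 := by
  obtain ⟨hα, hβγ, hgrad, hwdg⟩ := hg
  have hstepE : ∀ k : ℕ,
      A (k+1) * (f (x (k+1)) - f xstar) + 2 * ‖v (k+1) - xstar‖ ^ 2 ≤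
        A k * (f (x k) - f xstar) + 2 * ‖v k - xstar‖ ^ 2 := by
    intro k
    have hxk := hschemex k
    have hvk := hschemev k
    have hzk := hschemez k
    have hk0 : (0:ℝ) ≤ (k:ℝ) := Nat.cast_nonneg k
    have hAk : A k = ((k:ℝ)*h)^2 := hA k
    have hAk1 : A (k+1) = (((k:ℝ)+1)*h)^2 := by rw [hA]; push_cast; ring
    have hAknn : 0 ≤ A k := by rw [hAk]; positivity
    have hA1pos : 0 < A (k+1) := by rw [hAk1]; positivity
    have hann : 0 ≤ A (k+1) - A k := by rw [hAk, hAk1]; nlinarith [sq_nonneg h]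
    have hnum : α * (A (k+1) - A k)^2 ≤ 2 * A (k+1) := by
      rw [hAk, hAk1]
      nlinarith [mul_nonneg (sub_nonneg.2 hstep) (mul_nonneg (sq_nonneg h) (sq_nonneg (2*(k:ℝ)+1))),
        mul_nonneg (sq_nonneg h) hk0, sq_nonneg h]
    set G := g (x (k+1)) (z k) with hG
    -- key vector identity
    have hkey : A (k+1) • (x (k+1) - z k) = -((((A (k+1) - A k)^2)/4) • G) := by
      linear_combination (norm := module) hxk - hzk + (A (k+1) - A k) • hvk
    have h1 : ‖A (k+1) • (x (k+1) - z k)‖ = ‖(((A (k+1) - A k)^2)/4) • G‖ := by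
      rw [hkey, norm_neg]
    rw [norm_smul, norm_smul, Real.norm_eq_abs, Real.norm_eq_abs, abs_of_pos hA1pos,
      abs_of_nonneg (by positivity : (0:ℝ) ≤ ((A (k+1) - A k)^2)/4)] at h1
    have hnorm : A (k+1)^2 * ‖x (k+1) - z k‖^2 = (((A (k+1) - A k)^2)/4)^2 * ‖G‖^2 := by
      rw [← mul_pow, ← mul_pow, h1]
    have hnorm' : α * (A (k+1)^2 * ‖x (k+1) - z k‖^2)
        = α * ((((A (k+1) - A k)^2)/4)^2 * ‖G‖^2) := by rw [hnorm]
    have hN6 : A (k+1) * (α * ‖x (k+1) - z k‖^2) ≤ (A (k+1) - A k)^2/8 * ‖G‖^2 := by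
      have h9 : A (k+1) * (A (k+1) * (α * ‖x (k+1) - z k‖^2))
          ≤ A (k+1) * ((A (k+1) - A k)^2/8 * ‖G‖^2) := by
        nlinarith [hnorm', mul_nonneg (mul_nonneg (sub_nonneg.2 hnum)
          (sq_nonneg (A (k+1) - A k))) (sq_nonneg ‖G‖)]
      exact le_of_mul_le_mul_left h9 hA1pos
    -- inner product facts
    have hi3 : A k * ⟪G, x (k+1) - x k⟫ = (A (k+1) - A k) * ⟪G, v (k+1) - x (k+1)⟫ := by
      have h2 := congrArg (fun w : EuclideanSpace ℝ (Fin d) => (⟪G, w⟫ : ℝ)) hxk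
      simp only [real_inner_smul_right] at h2
      exact h2
    have hi4 : ⟪G, v (k+1) - v k⟫ = -((A (k+1) - A k)/4 * ‖G‖^2) := by
      rw [hvk]
      simp only [inner_neg_right, real_inner_smul_right, real_inner_self_eq_norm_sq]
    have hi4' : (A (k+1) - A k) * ⟪G, v (k+1) - v k⟫
        = -((A (k+1) - A k)^2/4 * ‖G‖^2) := by linear_combination (A (k+1) - A k) * hi4
    have sqdiff : ∀ p q : EuclideanSpace ℝ (Fin d), ‖p‖ ^ 2 - ‖q‖ ^ 2 = ⟪p - q, p + q⟫ := by
      intro p q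
      rw [inner_sub_left, inner_add_right, inner_add_right,
        real_inner_self_eq_norm_sq, real_inner_self_eq_norm_sq, real_inner_comm q p]
      ring
    have hi5 : ‖v (k+1) - xstar‖^2 - ‖v k - xstar‖^2
        = -((A (k+1) - A k)/4 * (⟪G, v (k+1)⟫ + ⟪G, v k⟫ - 2*⟪G, xstar⟫)) := by
      have h0 := sqdiff (v (k+1) - xstar) (v k - xstar)
      rw [sub_sub_sub_cancel_right, hvk] at h0
      rw [h0]
      simp only [inner_neg_left, real_inner_smul_left, inner_add_right, inner_sub_right]
      ring
    -- WDG instantiations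
    have hw1 := hwdg (x k) (x (k+1)) (z k)
    have hw2 := hwdg xstar (x (k+1)) (z k)
    rw [← hG] at hw1 hw2
    simp only [inner_sub_right] at hw1 hw2 hi3 hi4'
    have hw1' := mul_le_mul_of_nonneg_left hw1 hAknn
    have hw2' := mul_le_mul_of_nonneg_left hw2 hann
    set_option maxHeartbeats 1000000 in
    linarith [hw1', hw2', hi3, hi4', hi5, hN6,
      mul_nonneg (mul_nonneg hAknn hβ) (sq_nonneg ‖z k - x k‖),
      mul_nonneg (mul_nonneg hAknn hγ) (sq_nonneg ‖x (k+1) - x k‖),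
      mul_nonneg (mul_nonneg hann hβ) (sq_nonneg ‖z k - xstar‖),
      mul_nonneg (mul_nonneg hann hγ) (sq_nonneg ‖x (k+1) - xstar‖)]
  have hEk : ∀ k : ℕ, A k * (f (x k) - f xstar) + 2 * ‖v k - xstar‖ ^ 2
      ≤ 2 * ‖x₀ - xstar‖ ^ 2 := by
    intro k
    induction k with
    | zero => simp [hA 0, hv0]
    | succ n ih => exact (hstepE n).trans ih
  intro k hk
  have hkpos : (0:ℝ) < (k:ℝ) := by exact_mod_cast hk
  have hApos : (0:ℝ) < ((k:ℝ) * h) ^ 2 := by positivity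
  rw [le_div_iff₀ hApos]
  have hEkk := hEk k
  rw [hA k] at hEkk
  nlinarith [sq_nonneg ‖v k - xstar‖]
end

section
/- Let μ > 0, L > 0, and let f : ℝ^d → ℝ be a differentiable L-smooth function attaining its minimum value f⋆ and satisfying the Polyak–Łojasiewicz condition with parameter μ. Define the Gonzalez discrete gradient, for y ≠ x, by ∇_G f(y,x) = ∇f((y+x)/2) + [(f(y) - f(x) - ⟨∇f((y+x)/2), y-x⟩)/‖y-x‖²](y - x). Then for all x ≠ y: (a) ‖∇_G f(y,x) - ∇f(x)‖ ≤ (5L/8)‖y - x‖, and consequently (b) -‖∇_G f(y,x)‖ ≤ -√(2μ(f(x) - f⋆)) + (5L/8)‖y - x‖. -/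
set_option maxHeartbeats 2000000

open RealInnerProductSpace

lemma key_scalar (a u q N : ℝ) (ha : 0 ≤ a) (hu : u ≤ a^2/4) (hq : q^2 ≤ u)
    (h3 : (4*N - q)^2 ≤ a^2) (h4 : (N - q)^2 ≤ a^2/4) :
    u - 2*N*q + N^2 ≤ 25*a^2/64 := by
  rcases le_or_gt (7*a^2/64) (q^2) with hc | hc
  · nlinarith [sq_nonneg (N - q)]
  · rcases le_or_gt 0 q with hq0 | hq0
    · nlinarith [mul_nonneg (mul_nonneg (by nlinarith : (0:ℝ) ≤ 5*a/14 - q)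
        (by nlinarith : (0:ℝ) ≤ a/2 - q)) hq0,
        sq_nonneg (4*N - q + a), sq_nonneg (4*N - q - a), mul_nonneg hq0 ha]
    · nlinarith [mul_nonneg (mul_nonneg (by nlinarith : (0:ℝ) ≤ 5*a/14 + q)
        (by nlinarith : (0:ℝ) ≤ a/2 + q)) (by linarith : (0:ℝ) ≤ -q),
        sq_nonneg (4*N - q + a), sq_nonneg (4*N - q - a)]

/-- The Gonzalez discrete gradient of an `L`-smooth function satisfying the PŁ condition
is within `(5L/8)‖y - x‖` of `∇f(x)`, so it is a PŁ-type weak discrete gradient with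
`β = 5L/8`. -/
theorem gonzalez_PL_weak_discrete_gradient {d : ℕ} (μ L : ℝ) (hμ : 0 < μ) (hL : 0 < L)
    (f : EuclideanSpace ℝ (Fin d) → ℝ)
    (hf : Differentiable ℝ f)
    (hsmooth : ∀ x y, ‖gradient f x - gradient f y‖ ≤ L * ‖x - y‖)
    (fstar : ℝ) (hattain : ∃ xstar, f xstar = fstar) (hlb : ∀ y, fstar ≤ f y)
    (hPL : ∀ y, 2 * μ * (f y - fstar) ≤ ‖gradient f y‖ ^ 2) :
    ∀ x y : EuclideanSpace ℝ (Fin d), y ≠ x →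
      (‖(gradient f ((2:ℝ)⁻¹ • (y + x)) +
          ((f y - f x - ⟪gradient f ((2:ℝ)⁻¹ • (y + x)), y - x⟫) / ‖y - x‖ ^ 2) • (y - x))
          - gradient f x‖ ≤ 5 * L / 8 * ‖y - x‖) ∧
      (-‖gradient f ((2:ℝ)⁻¹ • (y + x)) +
          ((f y - f x - ⟪gradient f ((2:ℝ)⁻¹ • (y + x)), y - x⟫) / ‖y - x‖ ^ 2) • (y - x)‖
        ≤ -Real.sqrt (2 * μ * (f x - fstar)) + 5 * L / 8 * ‖y - x‖) := by
  intro x y hyx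
  have hS : (0:ℝ) < ‖y - x‖ := norm_pos_iff.mpr (sub_ne_zero.mpr hyx)
  set m : EuclideanSpace ℝ (Fin d) := (2:ℝ)⁻¹ • (y + x) with hm
  set S : ℝ := ‖y - x‖ with hSdef
  set g : EuclideanSpace ℝ (Fin d) := gradient f m with hgdef
  set K : ℝ := ⟪g, y - x⟫ with hKdef
  set N : ℝ := f y - f x - K with hNdef
  set DG : EuclideanSpace ℝ (Fin d) := g + (N / S ^ 2) • (y - x) with hDGdef
  -- continuity of the gradient
  have hgradcont : Continuous (gradient f) := by
    have hlip : LipschitzWith (Real.toNNReal L) (gradient f) := by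
      apply LipschitzWith.of_dist_le_mul
      intro a b
      rw [dist_eq_norm, dist_eq_norm]
      calc ‖gradient f a - gradient f b‖ ≤ L * ‖a - b‖ := hsmooth a b
        _ = (Real.toNNReal L : ℝ) * ‖a - b‖ := by rw [Real.coe_toNNReal _ hL.le]
    exact hlip.continuous
  set P : ℝ → ℝ := fun t => ⟪gradient f (x + t • (y - x)), y - x⟫ with hPdef
  have hPcont : Continuous P := by
    apply Continuous.inner
    · exact hgradcont.comp (by continuity)
    · exact continuous_const
  have hderiv : ∀ t : ℝ, HasDerivAt (fun t : ℝ => f (x + t • (y - x))) (P t) t := by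
    intro t
    have hline : HasDerivAt (fun t : ℝ => x + t • (y - x)) (y - x) t := by
      simpa using ((hasDerivAt_id t).smul_const (y - x)).const_add x
    have hF : HasFDerivAt f
        (InnerProductSpace.toDual ℝ _ (gradient f (x + t • (y - x)))) (x + t • (y - x)) :=
      hasGradientAt_iff_hasFDerivAt.mp (hf _).hasGradientAt
    have := hF.comp_hasDerivAt t hline
    rw [InnerProductSpace.toDual_apply_apply] at this
    exact this
  have hftc : ∫ t in (0:ℝ)..1, P t = f y - f x := by
    have h1 := intervalIntegral.integral_eq_sub_of_hasDerivAt
      (f := fun t : ℝ => f (x + t • (y - x))) (f' := P)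
      (fun t _ => hderiv t) (hPcont.intervalIntegrable 0 1)
    simpa using h1
  -- pointwise bounds
  have hdist : ∀ t : ℝ, x + t • (y - x) - m = (t - 2⁻¹) • (y - x) := by
    intro t; rw [hm]; module
  have hPt : ∀ t : ℝ, |P t - K| ≤ L * |t - 2⁻¹| * S ^ 2 := by
    intro t
    have h1 : P t - K = ⟪gradient f (x + t • (y - x)) - g, y - x⟫ := by
      rw [inner_sub_left]
    rw [h1]
    calc |⟪gradient f (x + t • (y - x)) - g, y - x⟫|
        ≤ ‖gradient f (x + t • (y - x)) - g‖ * ‖y - x‖ := abs_real_inner_le_norm _ _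
      _ ≤ (L * ‖x + t • (y - x) - m‖) * S := by
          apply mul_le_mul_of_nonneg_right (hsmooth _ m) hS.le
      _ = L * |t - 2⁻¹| * S ^ 2 := by
          rw [hdist t, norm_smul, Real.norm_eq_abs]; ring
  have hP0 : P 0 = ⟪gradient f x, y - x⟫ := by simp [hPdef]
  set q : ℝ := ⟪gradient f x - g, y - x⟫ with hqdef
  have hq' : P 0 - K = q := by rw [hP0, hqdef, inner_sub_left]
  have hPLip : ∀ t : ℝ, |P t - P 0| ≤ L * |t| * S ^ 2 := by
    intro t
    have h1 : P t - P 0 = ⟪gradient f (x + t • (y - x)) - gradient f x, y - x⟫ := by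
      rw [hP0, inner_sub_left]
    rw [h1]
    calc |⟪gradient f (x + t • (y - x)) - gradient f x, y - x⟫|
        ≤ ‖gradient f (x + t • (y - x)) - gradient f x‖ * ‖y - x‖ := abs_real_inner_le_norm _ _
      _ ≤ (L * ‖x + t • (y - x) - x‖) * S := by
          apply mul_le_mul_of_nonneg_right (hsmooth _ x) hS.le
      _ = L * |t| * S ^ 2 := by
          have : x + t • (y - x) - x = t • (y - x) := by module
          rw [this, norm_smul, Real.norm_eq_abs]; ring
  -- integrability
  have hint : ∀ a b : ℝ, IntervalIntegrable (fun t => P t - K) MeasureTheory.volume a b :=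
    fun a b => ((hPcont.sub continuous_const).intervalIntegrable a b)
  have hNint : N = ∫ t in (0:ℝ)..1, (P t - K) := by
    rw [intervalIntegral.integral_sub (hPcont.intervalIntegrable 0 1)
      (intervalIntegrable_const), hftc]
    simp [hNdef]
  -- split integral
  have hsplit : ∫ t in (0:ℝ)..1, (P t - K) =
      (∫ t in (0:ℝ)..(2⁻¹ : ℝ), (P t - K)) + ∫ t in (2⁻¹ : ℝ)..1, (P t - K) :=
    (intervalIntegral.integral_add_adjacent_intervals (hint 0 2⁻¹) (hint 2⁻¹ 1)).symm
  -- the linear integral on [1/2, 1]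
  have hid : ∀ a b c : ℝ, ∫ t in a..b, (t - c) = (b ^ 2 - a ^ 2) / 2 - (b - a) * c := by
    intro a b c
    rw [intervalIntegral.integral_sub (continuous_id'.intervalIntegrable _ _)
      (intervalIntegrable_const), integral_id, intervalIntegral.integral_const, smul_eq_mul]
  have hlin : ∫ t in (2⁻¹ : ℝ)..1, (L * S ^ 2) * (t - 2⁻¹) = L * S ^ 2 / 8 := by
    rw [intervalIntegral.integral_const_mul, hid]
    ring
  have hlin2 : ∫ t in (0:ℝ)..1, (L * S ^ 2) * t = L * S ^ 2 / 2 := by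
    rw [intervalIntegral.integral_const_mul, integral_id]
    ring
  -- upper bound for N
  have hub : N ≤ q / 4 + L * S ^ 2 / 4 := by
    have i1 : ∫ t in (0:ℝ)..(2⁻¹ : ℝ), (P t - K) ≤ q / 4 + L * S ^ 2 / 8 := by
      have := intervalIntegral.integral_mono_on (by norm_num : (0:ℝ) ≤ 2⁻¹)
        (hint 0 2⁻¹) (intervalIntegrable_const (c := q / 2 + L * S ^ 2 / 4)) ?_
      · rw [intervalIntegral.integral_const] at this
        calc (∫ t in (0:ℝ)..(2⁻¹:ℝ), (P t - K)) ≤ ((2⁻¹:ℝ) - 0) • (q / 2 + L * S ^ 2 / 4) := this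
          _ = q / 4 + L * S ^ 2 / 8 := by simp; ring
      · intro t ht
        obtain ⟨ht0, ht1⟩ := ht
        have e1 := abs_le.mp (hPLip t)
        have e2 := abs_le.mp (hPt t)
        rw [abs_of_nonneg ht0] at e1
        rw [abs_of_nonpos (by linarith : t - 2⁻¹ ≤ 0)] at e2
        have hr1 : L * -(t - 2⁻¹) * S ^ 2 = L * S ^ 2 / 2 - L * t * S ^ 2 := by ring
        rw [hr1] at e2
        linarith [hq']
    have i2 : ∫ t in (2⁻¹ : ℝ)..1, (P t - K) ≤ L * S ^ 2 / 8 := by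
      rw [← hlin]
      apply intervalIntegral.integral_mono_on (by norm_num) (hint _ _)
        (((continuous_const.mul (continuous_id.sub continuous_const))).intervalIntegrable _ _)
      intro t ht
      obtain ⟨ht0, ht1⟩ := ht
      have e2 := abs_le.mp (hPt t)
      rw [abs_of_nonneg (by linarith : (0:ℝ) ≤ t - 2⁻¹)] at e2
      calc P t - K ≤ L * (t - 2⁻¹) * S ^ 2 := e2.2
        _ = (L * S ^ 2) * (t - 2⁻¹) := by ring
    rw [hNint, hsplit]; linarith
  -- lower bound for N
  have hlb' : q / 4 - L * S ^ 2 / 4 ≤ N := by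
    have i1 : q / 4 - L * S ^ 2 / 8 ≤ ∫ t in (0:ℝ)..(2⁻¹ : ℝ), (P t - K) := by
      have := intervalIntegral.integral_mono_on (by norm_num : (0:ℝ) ≤ 2⁻¹)
        (intervalIntegrable_const (c := q / 2 - L * S ^ 2 / 4)) (hint 0 2⁻¹) ?_
      · rw [intervalIntegral.integral_const] at this
        calc q / 4 - L * S ^ 2 / 8 = ((2⁻¹:ℝ) - 0) • (q / 2 - L * S ^ 2 / 4) := by simp; ring
          _ ≤ _ := this
      · intro t ht
        obtain ⟨ht0, ht1⟩ := ht
        have e1 := abs_le.mp (hPLip t)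
        have e2 := abs_le.mp (hPt t)
        rw [abs_of_nonneg ht0] at e1
        rw [abs_of_nonpos (by linarith : t - 2⁻¹ ≤ 0)] at e2
        have hr1 : L * -(t - 2⁻¹) * S ^ 2 = L * S ^ 2 / 2 - L * t * S ^ 2 := by ring
        rw [hr1] at e2
        linarith [hq']
    have i2 : -(L * S ^ 2 / 8) ≤ ∫ t in (2⁻¹ : ℝ)..1, (P t - K) := by
      have hlin' : ∫ t in (2⁻¹ : ℝ)..1, (-(L * S ^ 2)) * (t - 2⁻¹) = -(L * S ^ 2 / 8) := by
        rw [intervalIntegral.integral_const_mul, hid]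
        ring
      rw [← hlin']
      apply intervalIntegral.integral_mono_on (by norm_num)
        (((continuous_const.mul (continuous_id.sub continuous_const))).intervalIntegrable _ _)
        (hint _ _)
      intro t ht
      obtain ⟨ht0, ht1⟩ := ht
      have e2 := abs_le.mp (hPt t)
      rw [abs_of_nonneg (by linarith : (0:ℝ) ≤ t - 2⁻¹)] at e2
      calc (-(L * S ^ 2)) * (t - 2⁻¹) = -(L * (t - 2⁻¹) * S ^ 2) := by ring
        _ ≤ P t - K := e2.1
    rw [hNint, hsplit]; linarith
  -- |N - q| bound
  have hNq : (N - q) ^ 2 ≤ (L * S ^ 2) ^ 2 / 4 := by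
    have hup : N - q ≤ L * S ^ 2 / 2 := by
      have : ∫ t in (0:ℝ)..1, (P t - P 0) ≤ L * S ^ 2 / 2 := by
        rw [← hlin2]
        apply intervalIntegral.integral_mono_on (by norm_num)
          ((hPcont.sub continuous_const).intervalIntegrable _ _)
          ((continuous_const.mul continuous_id).intervalIntegrable _ _)
        intro t ht
        obtain ⟨ht0, ht1⟩ := ht
        have e1 := abs_le.mp (hPLip t)
        rw [abs_of_nonneg ht0] at e1
        calc P t - P 0 ≤ L * t * S ^ 2 := e1.2
          _ = (L * S ^ 2) * t := by ring
      have heq : ∫ t in (0:ℝ)..1, (P t - P 0) = N - q := by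
        rw [intervalIntegral.integral_sub (hPcont.intervalIntegrable 0 1)
          (intervalIntegrable_const), hftc]
        simp [hNdef, ← hq']
      linarith [heq ▸ this]
    have hdown : -(L * S ^ 2 / 2) ≤ N - q := by
      have : -(L * S ^ 2 / 2) ≤ ∫ t in (0:ℝ)..1, (P t - P 0) := by
        have hlin3 : ∫ t in (0:ℝ)..1, (-(L * S ^ 2)) * t = -(L * S ^ 2 / 2) := by
          rw [intervalIntegral.integral_const_mul, integral_id]; ring
        rw [← hlin3]
        apply intervalIntegral.integral_mono_on (by norm_num)
          ((continuous_const.mul continuous_id).intervalIntegrable _ _)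
          ((hPcont.sub continuous_const).intervalIntegrable _ _)
        intro t ht
        obtain ⟨ht0, ht1⟩ := ht
        have e1 := abs_le.mp (hPLip t)
        rw [abs_of_nonneg ht0] at e1
        calc (-(L * S ^ 2)) * t = -(L * t * S ^ 2) := by ring
          _ ≤ P t - P 0 := e1.1
      have heq : ∫ t in (0:ℝ)..1, (P t - P 0) = N - q := by
        rw [intervalIntegral.integral_sub (hPcont.intervalIntegrable 0 1)
          (intervalIntegrable_const), hftc]
        simp [hNdef, ← hq']
      linarith [heq ▸ this]
    calc (N - q) ^ 2 ≤ (L * S ^ 2 / 2) ^ 2 := sq_le_sq' hdown hup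
      _ = (L * S ^ 2) ^ 2 / 4 := by ring
  have h3 : (4 * N - q) ^ 2 ≤ (L * S ^ 2) ^ 2 :=
    sq_le_sq' (by linarith) (by linarith)
  -- the vector computation
  set e0 : EuclideanSpace ℝ (Fin d) := gradient f x - g with he0def
  have hTeq : DG - gradient f x = (N / S ^ 2) • (y - x) - e0 := by
    rw [hDGdef, he0def]; module
  have hqe : q = ⟪e0, y - x⟫ := by rw [hqdef, he0def]
  have he0 : ‖e0‖ ≤ L * S / 2 := by
    have hxm : x - m = (-(2⁻¹ : ℝ)) • (y - x) := by rw [hm]; module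
    calc ‖e0‖ ≤ L * ‖x - m‖ := hsmooth x m
      _ = L * S / 2 := by
        rw [hxm, norm_smul, Real.norm_eq_abs, abs_neg, abs_of_pos (by norm_num : (0:ℝ) < 2⁻¹)]
        ring
  have hnorm2 : ‖DG - gradient f x‖ ^ 2 = (‖e0‖ ^ 2 * S ^ 2 - 2 * N * q + N ^ 2) / S ^ 2 := by
    have hq3 : ⟪y - x, e0⟫ = q := by rw [real_inner_comm]
    rw [hTeq, norm_sub_sq_real, real_inner_smul_left, hq3, norm_smul, Real.norm_eq_abs,
      mul_pow, sq_abs]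
    have hS0 : S ≠ 0 := hS.ne'
    field_simp
    ring
  have hS2 : (0:ℝ) < S ^ 2 := by positivity
  have hu : ‖e0‖ ^ 2 * S ^ 2 ≤ (L * S ^ 2) ^ 2 / 4 := by
    have h1 : ‖e0‖ ^ 2 ≤ (L * S / 2) ^ 2 := pow_le_pow_left₀ (norm_nonneg _) he0 2
    calc ‖e0‖ ^ 2 * S ^ 2 ≤ (L * S / 2) ^ 2 * S ^ 2 :=
          mul_le_mul_of_nonneg_right h1 hS2.le
      _ = (L * S ^ 2) ^ 2 / 4 := by ring
  have hq2 : q ^ 2 ≤ ‖e0‖ ^ 2 * S ^ 2 := by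
    have := abs_real_inner_le_norm e0 (y - x)
    nlinarith [sq_abs q, abs_nonneg q]
  have hkey := key_scalar (L * S ^ 2) (‖e0‖ ^ 2 * S ^ 2) q N (by positivity) hu hq2 h3 hNq
  have parta : ‖DG - gradient f x‖ ≤ 5 * L / 8 * S := by
    have hT2 : ‖DG - gradient f x‖ ^ 2 ≤ (5 * L / 8 * S) ^ 2 := by
      rw [hnorm2, div_le_iff₀ hS2]
      calc ‖e0‖ ^ 2 * S ^ 2 - 2 * N * q + N ^ 2 ≤ 25 * (L * S ^ 2) ^ 2 / 64 := hkey
        _ = (5 * L / 8 * S) ^ 2 * S ^ 2 := by ring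
    have h0 : (0:ℝ) ≤ 5 * L / 8 * S := by positivity
    have hsq := Real.sqrt_le_sqrt hT2
    rwa [Real.sqrt_sq (norm_nonneg _), Real.sqrt_sq h0] at hsq
  refine ⟨parta, ?_⟩
  -- part b
  have hb1 : Real.sqrt (2 * μ * (f x - fstar)) ≤ ‖gradient f x‖ := by
    calc Real.sqrt (2 * μ * (f x - fstar)) ≤ Real.sqrt (‖gradient f x‖ ^ 2) :=
          Real.sqrt_le_sqrt (hPL x)
      _ = ‖gradient f x‖ := Real.sqrt_sq (norm_nonneg _)
  have hb2 : ‖gradient f x‖ ≤ ‖DG‖ + ‖DG - gradient f x‖ := by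
    calc ‖gradient f x‖ = ‖DG - (DG - gradient f x)‖ := by rw [sub_sub_cancel]
      _ ≤ ‖DG‖ + ‖DG - gradient f x‖ := norm_sub_le _ _
  linarith
end

section
/- Let L > 0 and let f : ℝ^d → ℝ be a differentiable L-smooth function. Define the Itoh–Abe discrete gradient componentwise, for y, x ∈ ℝ^d with y_i ≠ x_i for all i, by (∇_IA f(y,x))_i = ( f(y₁,…,y_i, x_{i+1},…,x_d) - f(y₁,…,y_{i-1}, x_i,…,x_d) ) / (y_i - x_i). Then for all x, y ∈ ℝ^d with y_i ≠ x_i for every coordinate i, ‖∇_IA f(y,x) - ∇f(x)‖ ≤ √d · L · ‖y - x‖. -/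
open RealInnerProductSpace

lemma fderiv_single_eq_gradient' {d : ℕ} (f : EuclideanSpace ℝ (Fin d) → ℝ)
    (hf : Differentiable ℝ f) (p : EuclideanSpace ℝ (Fin d)) (i : Fin d) :
    fderiv ℝ f p (EuclideanSpace.single i 1) = gradient f p i := by
  have h := (hf p).hasGradientAt.hasFDerivAt
  have heq : fderiv ℝ f p = InnerProductSpace.toDual ℝ _ (gradient f p) := h.fderiv
  rw [heq, InnerProductSpace.toDual_apply_apply]
  rw [EuclideanSpace.inner_single_right]
  simp

lemma hasDerivAt_euclid_update {d : ℕ} (z : EuclideanSpace ℝ (Fin d)) (i : Fin d) (s : ℝ) :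
    HasDerivAt (𝕜 := ℝ) (F := EuclideanSpace ℝ (Fin d))
      (fun t : ℝ => WithLp.toLp 2 (Function.update z i t))
      (EuclideanSpace.single i 1) s := by
  have heq : (fun t : ℝ => (WithLp.toLp 2 (Function.update z i t) : EuclideanSpace ℝ (Fin d)))
      = fun t : ℝ => z + (t - z i) • (EuclideanSpace.single i 1 : EuclideanSpace ℝ (Fin d)) := by
    funext t
    ext j
    by_cases hj : j = i
    · subst hj
      simp [Function.update_apply, EuclideanSpace.single_apply, PiLp.add_apply, PiLp.smul_apply]
    · simp [Function.update_apply, hj, EuclideanSpace.single_apply, PiLp.add_apply,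
        PiLp.smul_apply]
  rw [heq]
  have h1 : HasDerivAt (fun t : ℝ => t - z i) 1 s := (hasDerivAt_id s).sub_const _
  have h2 := h1.smul_const (EuclideanSpace.single i 1 : EuclideanSpace ℝ (Fin d))
  simpa using h2.const_add z

lemma abs_coord_le_norm' {d : ℕ} (v : EuclideanSpace ℝ (Fin d)) (i : Fin d) :
    |v i| ≤ ‖v‖ := by
  rw [EuclideanSpace.norm_eq]
  have h : |v i| = Real.sqrt (‖v i‖ ^ 2) := by rw [Real.sqrt_sq_eq_abs]; simp
  rw [h]
  apply Real.sqrt_le_sqrt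
  exact Finset.single_le_sum (f := fun j => ‖v j‖ ^ 2) (fun j _ => by positivity)
    (Finset.mem_univ i)

/-- The Itoh–Abe discrete gradient of an `L`-smooth function is within `√d L ‖y - x‖`
of `∇f(x)`. -/
theorem itoh_abe_gradient_error_bound {d : ℕ} (L : ℝ) (hL : 0 < L)
    (f : EuclideanSpace ℝ (Fin d) → ℝ)
    (hf : Differentiable ℝ f)
    (hsmooth : ∀ x y, ‖gradient f x - gradient f y‖ ≤ L * ‖x - y‖)
    (gIA : EuclideanSpace ℝ (Fin d) → EuclideanSpace ℝ (Fin d) → EuclideanSpace ℝ (Fin d))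
    (hgIA : ∀ y x : EuclideanSpace ℝ (Fin d), ∀ i : Fin d,
      gIA y x i =
        (f (WithLp.toLp 2 (fun j => if j ≤ i then y j else x j))
          - f (WithLp.toLp 2 (fun j => if j < i then y j else x j))) / (y i - x i)) :
    ∀ x y : EuclideanSpace ℝ (Fin d), (∀ i, y i ≠ x i) →
      ‖gIA y x - gradient f x‖ ≤ Real.sqrt d * L * ‖y - x‖ := by
  intro x y hne
  have key : ∀ i : Fin d, |gIA y x i - gradient f x i| ≤ L * ‖y - x‖ := by
    intro i
    set z : EuclideanSpace ℝ (Fin d) := WithLp.toLp 2 (fun j => if j < i then y j else x j) with hz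
    set φ : ℝ → ℝ := fun s => f (WithLp.toLp 2 (Function.update z i s)) with hφ
    have hderiv : ∀ s : ℝ,
        HasDerivAt φ (gradient f (WithLp.toLp 2 (Function.update z i s)) i) s := by
      intro s
      have h := (hf (WithLp.toLp 2 (Function.update z i s))).hasFDerivAt.comp_hasDerivAt s
        (hasDerivAt_euclid_update z i s)
      rw [fderiv_single_eq_gradient' f hf] at h
      exact h
    have hzx : z i = x i := by rw [hz]; simp
    have hup_x : (WithLp.toLp 2 (Function.update z i (x i)) : EuclideanSpace ℝ (Fin d)) = z := by
      rw [← hzx, Function.update_eq_self]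
    have hup_y : (WithLp.toLp 2 (Function.update z i (y i)) : EuclideanSpace ℝ (Fin d))
        = WithLp.toLp 2 (fun j => if j ≤ i then y j else x j) := by
      congr 1
      funext j
      rcases lt_trichotomy j i with h | h | h
      · rw [Function.update_apply, if_neg h.ne, hz]; simp [h, h.le]
      · subst h; rw [Function.update_self]; simp
      · rw [Function.update_apply, if_neg h.ne', hz]; simp [not_lt.mpr h.le, not_le.mpr h]
    have hslope : gIA y x i = (φ (y i) - φ (x i)) / (y i - x i) := by
      rw [hgIA, hφ]
      simp only [hup_x, hup_y]
      rfl
    have hmvt : ∃ c, |c - x i| ≤ |y i - x i| ∧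
        gradient f (WithLp.toLp 2 (Function.update z i c)) i = gIA y x i := by
      rcases lt_or_gt_of_ne (hne i).symm with h | h
      · obtain ⟨c, hc, hceq⟩ := exists_hasDerivAt_eq_slope φ
          (fun s => gradient f (WithLp.toLp 2 (Function.update z i s)) i) h
          (fun s _ => (hderiv s).continuousAt.continuousWithinAt)
          (fun s _ => hderiv s)
        refine ⟨c, ?_, by rw [hceq, hslope]⟩
        rw [abs_of_pos (by linarith [hc.1] : (0:ℝ) < c - x i),
          abs_of_pos (by linarith : (0:ℝ) < y i - x i)]
        linarith [hc.2]
      · obtain ⟨c, hc, hceq⟩ := exists_hasDerivAt_eq_slope φ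
          (fun s => gradient f (WithLp.toLp 2 (Function.update z i s)) i) h
          (fun s _ => (hderiv s).continuousAt.continuousWithinAt)
          (fun s _ => hderiv s)
        refine ⟨c, ?_, ?_⟩
        · rw [abs_of_neg (by linarith [hc.2] : c - x i < 0),
            abs_of_neg (by linarith : y i - x i < 0)]
          linarith [hc.1]
        · rw [hceq, hslope]
          rw [div_eq_div_iff (by linarith : x i - y i ≠ 0) (sub_ne_zero.mpr (hne i))]
          ring
    obtain ⟨c, hc, hceq⟩ := hmvt
    set ξ : EuclideanSpace ℝ (Fin d) := WithLp.toLp 2 (Function.update z i c) with hξ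
    have h1 : |gIA y x i - gradient f x i| ≤ ‖gradient f ξ - gradient f x‖ := by
      rw [← hceq]
      have := abs_coord_le_norm' (gradient f ξ - gradient f x) i
      simpa [PiLp.sub_apply] using this
    have h2 : ‖ξ - x‖ ≤ ‖y - x‖ := by
      rw [EuclideanSpace.norm_eq, EuclideanSpace.norm_eq]
      apply Real.sqrt_le_sqrt
      apply Finset.sum_le_sum
      intro j _
      have hcoord : ‖(ξ - x) j‖ ≤ ‖(y - x) j‖ := by
        simp only [PiLp.sub_apply, hξ, WithLp.ofLp_toLp, Function.update_apply, Real.norm_eq_abs]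
        by_cases hj : j = i
        · subst hj; simpa using hc
        · rw [if_neg hj, hz]
          by_cases hlt : j < i
          · simp [hlt]
          · simp [hlt]
      have h0 : (0:ℝ) ≤ ‖(ξ - x) j‖ := norm_nonneg _
      nlinarith
    calc |gIA y x i - gradient f x i| ≤ ‖gradient f ξ - gradient f x‖ := h1
      _ ≤ L * ‖ξ - x‖ := hsmooth ξ x
      _ ≤ L * ‖y - x‖ := by nlinarith [norm_nonneg (ξ - x)]
  have hC : 0 ≤ L * ‖y - x‖ := by positivity
  rw [EuclideanSpace.norm_eq]
  have hsum : ∑ j, ‖(gIA y x - gradient f x) j‖ ^ 2 ≤ d * (L * ‖y - x‖) ^ 2 := by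
    calc ∑ j, ‖(gIA y x - gradient f x) j‖ ^ 2
        ≤ ∑ _j : Fin d, (L * ‖y - x‖) ^ 2 := by
          apply Finset.sum_le_sum
          intro j _
          have hj : |(gIA y x - gradient f x) j| ≤ L * ‖y - x‖ := by
            simpa [PiLp.sub_apply] using key j
          rw [Real.norm_eq_abs]
          nlinarith [abs_nonneg ((gIA y x - gradient f x) j),
            sq_abs ((gIA y x - gradient f x) j)]
      _ = d * (L * ‖y - x‖) ^ 2 := by simp [Finset.sum_const, nsmul_eq_mul]
  calc Real.sqrt (∑ j, ‖(gIA y x - gradient f x) j‖ ^ 2)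
      ≤ Real.sqrt (d * (L * ‖y - x‖) ^ 2) := Real.sqrt_le_sqrt hsum
    _ = Real.sqrt d * (L * ‖y - x‖) := by
        rw [Real.sqrt_mul (Nat.cast_nonneg d), Real.sqrt_sq hC]
    _ = Real.sqrt d * L * ‖y - x‖ := by ring
end

section
/- Let μ > 0 and let f : ℝ^d → ℝ be a differentiable function attaining its minimum value f⋆. Let g : ℝ^d × ℝ^d → ℝ^d be a PŁ-type weak discrete gradient of f with parameters (α, β), i.e., g(x,x) = ∇f(x), f(y) - f(x) ≤ ⟨g(y,x), y - x⟩ + α‖y - x‖², and -‖g(y,x)‖ ≤ -√(2μ(f(x) - f⋆)) + β‖y - x‖ for all x, y, with α, β > 0. Let h > 0 satisfy αh ≤ 1, and let (x_k)_{k≥0} ⊆ ℝ^d satisfy x_{k+1} - x_k = -h · g(x_{k+1}, x_k) with x_0 = x₀. Then for every k ≥ 0, f(x_k) - f⋆ ≤ ( 1 - 2μh(1 - αh)/(1 + βh)² )^k ( f(x₀) - f⋆ ). -/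
set_option maxHeartbeats 800000


open RealInnerProductSpace

/-- Convergence rate of the abstract weak discrete gradient method for functions
satisfying the PŁ condition: `f(x_k) - f⋆ ≤ (1 - 2μh(1 - αh)/(1 + βh)²)^k (f(x₀) - f⋆)`
under the step size condition `αh ≤ 1`. -/
theorem weak_DG_method_PL_rate {d : ℕ} (μ : ℝ) (hμ : 0 < μ)
    (f : EuclideanSpace ℝ (Fin d) → ℝ)
    (hf : Differentiable ℝ f)
    (fstar : ℝ) (hattain : ∃ xstar, f xstar = fstar) (hlb : ∀ y, fstar ≤ f y)
    (g : EuclideanSpace ℝ (Fin d) → EuclideanSpace ℝ (Fin d) → EuclideanSpace ℝ (Fin d))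
    (α β : ℝ) (hα : 0 < α) (hβ : 0 < β)
    (hg0 : ∀ x, g x x = gradient f x)
    (hgchain : ∀ x y : EuclideanSpace ℝ (Fin d),
      f y - f x ≤ ⟪g y x, y - x⟫ + α * ‖y - x‖ ^ 2)
    (hgPL : ∀ x y : EuclideanSpace ℝ (Fin d),
      -‖g y x‖ ≤ -Real.sqrt (2 * μ * (f x - fstar)) + β * ‖y - x‖)
    (h : ℝ) (hh : 0 < h) (hstep : α * h ≤ 1)
    (x : ℕ → EuclideanSpace ℝ (Fin d))
    (x₀ : EuclideanSpace ℝ (Fin d))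
    (hscheme : ∀ k : ℕ, x (k + 1) - x k = -(h • g (x (k + 1)) (x k)))
    (hx0 : x 0 = x₀) :
    ∀ k : ℕ, f (x k) - fstar ≤
      (1 - 2 * μ * h * (1 - α * h) / (1 + β * h) ^ 2) ^ k * (f x₀ - fstar) := by

  have hbh : (0:ℝ) < 1 + β * h := by positivity
  have hb2 : (0:ℝ) < (1 + β * h) ^ 2 := by positivity
  have hah : (0:ℝ) ≤ 1 - α * h := by linarith
  set c : ℝ := 1 - 2 * μ * h * (1 - α * h) / (1 + β * h) ^ 2 with hc
  have hq : 2 * μ * h * (1 - α * h) / (1 + β * h) ^ 2 * (1 + β * h) ^ 2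
      = 2 * μ * h * (1 - α * h) := div_mul_cancel₀ _ (ne_of_gt hb2)
  have key : ∀ k, f (x (k + 1)) - fstar ≤ c * (f (x k) - fstar) := by
    intro k
    set G := g (x (k + 1)) (x k) with hG
    have hv : x (k + 1) - x k = -(h • G) := hscheme k
    have hnv : ‖x (k + 1) - x k‖ = h * ‖G‖ := by
      rw [hv, norm_neg, norm_smul, Real.norm_of_nonneg hh.le]
    have hip : ⟪G, x (k + 1) - x k⟫ = -(h * ‖G‖ ^ 2) := by
      rw [hv, inner_neg_right, real_inner_smul_right, real_inner_self_eq_norm_sq]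
    have h1 : f (x (k + 1)) - f (x k) ≤ -(h * ‖G‖ ^ 2) + α * (h * ‖G‖) ^ 2 := by
      have := hgchain (x k) (x (k + 1))
      rw [hip, hnv] at this
      nlinarith [this]
    have hΔ : 0 ≤ f (x k) - fstar := sub_nonneg.2 (hlb _)
    have hsq : Real.sqrt (2 * μ * (f (x k) - fstar)) ≤ (1 + β * h) * ‖G‖ := by
      have := hgPL (x k) (x (k + 1))
      rw [hnv] at this
      nlinarith [this]
    have hs : Real.sqrt (2 * μ * (f (x k) - fstar)) ^ 2 = 2 * μ * (f (x k) - fstar) :=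
      Real.sq_sqrt (by nlinarith)
    have h2 : 2 * μ * (f (x k) - fstar) ≤ ((1 + β * h) * ‖G‖) ^ 2 := by
      nlinarith [Real.sqrt_nonneg (2 * μ * (f (x k) - fstar)), hsq, hs]
    have h3 : 2 * μ * h * (1 - α * h) * (f (x k) - fstar)
        ≤ h * (1 - α * h) * ((1 + β * h) * ‖G‖) ^ 2 := by
      nlinarith [mul_le_mul_of_nonneg_left h2 (mul_nonneg hh.le hah)]
    have h4 : 2 * μ * h * (1 - α * h) / (1 + β * h) ^ 2 * (f (x k) - fstar)
        ≤ h * (1 - α * h) * ‖G‖ ^ 2 := by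
      rw [div_mul_eq_mul_div, div_le_iff₀ hb2]
      nlinarith [h3]
    have h5 : f (x (k + 1)) - f (x k) ≤ -(h * (1 - α * h) * ‖G‖ ^ 2) := by nlinarith [h1]
    rw [hc]
    nlinarith [h4, h5]
  have hΔ0 : 0 ≤ f x₀ - fstar := sub_nonneg.2 (hlb _)
  rcases eq_or_lt_of_le hΔ0 with h0 | h0
  · intro k
    induction k with
    | zero => simpa [hx0] using le_of_eq rfl
    | succ n ih =>
      have hΔn : 0 ≤ f (x n) - fstar := sub_nonneg.2 (hlb _)
      have hzero : f (x n) - fstar = 0 := le_antisymm (by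
        rw [← h0] at ih; simpa using ih) hΔn
      have := key n
      rw [hzero] at this
      simp only [mul_zero] at this
      calc f (x (n + 1)) - fstar ≤ 0 := this
        _ ≤ c ^ (n + 1) * (f x₀ - fstar) := by rw [← h0]; simp
  · have hcnn : 0 ≤ c := by
      have h1 := key 0
      rw [hx0] at h1
      have h2 : 0 ≤ f (x 1) - fstar := sub_nonneg.2 (hlb _)
      nlinarith
    intro k
    induction k with
    | zero => simp [hx0]
    | succ n ih =>
      calc f (x (n + 1)) - fstar ≤ c * (f (x n) - fstar) := key n
        _ ≤ c * (c ^ n * (f x₀ - fstar)) := mul_le_mul_of_nonneg_left ih hcnn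
        _ = c ^ (n + 1) * (f x₀ - fstar) := by ring
end

section
/- Let 0 < μ ≤ L and let f : ℝ^d → ℝ be a differentiable, L-smooth, μ-strongly convex function. Then for all y, z ∈ ℝ^d, | f(y) - f(z) - ⟨∇f((y+z)/2), y - z⟩ | ≤ ((L - μ)/8) ‖y - z‖². -/
open RealInnerProductSpace

section Aux

variable {d : ℕ}

private lemma lineDeriv' (f : EuclideanSpace ℝ (Fin d) → ℝ) (hf : Differentiable ℝ f)
    (a u : EuclideanSpace ℝ (Fin d)) (t : ℝ) :
    HasDerivAt (fun s : ℝ => f (a + s • u)) ⟪gradient f (a + t • u), u⟫ t := by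
  have h1 : HasDerivAt (fun s : ℝ => a + s • u) u t := by
    simpa using ((hasDerivAt_id t).smul_const u).const_add a
  have h2 := (hf (a + t • u)).hasGradientAt
  rw [hasGradientAt_iff_hasFDerivAt] at h2
  have := h2.comp_hasDerivAt t h1
  rw [InnerProductSpace.toDual_apply_apply] at this
  exact this

private lemma normsqLineDeriv (a u : EuclideanSpace ℝ (Fin d)) (t : ℝ) :
    HasDerivAt (fun s : ℝ => ‖a + s • u‖ ^ 2) (2 * ⟪a, u⟫ + 2 * t * ‖u‖ ^ 2) t := by
  have heq : (fun s : ℝ => ‖a + s • u‖ ^ 2)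
      = fun s : ℝ => ‖a‖ ^ 2 + 2 * (s * ⟪a, u⟫) + s ^ 2 * ‖u‖ ^ 2 := by
    funext s
    rw [norm_add_sq_real, real_inner_smul_right, norm_smul]
    simp [Real.norm_eq_abs, mul_pow, sq_abs]
  rw [heq]
  have h1 : HasDerivAt (fun s : ℝ => ‖a‖ ^ 2 + 2 * (s * ⟪a, u⟫)) (2 * ⟪a, u⟫) t := by
    simpa using (((hasDerivAt_id t).mul_const ⟪a, u⟫).const_mul 2).const_add (‖a‖ ^ 2)
  have h2 : HasDerivAt (fun s : ℝ => s ^ 2 * ‖u‖ ^ 2) (2 * t * ‖u‖ ^ 2) t := by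
    simpa [mul_comm] using (hasDerivAt_pow 2 t).mul_const (‖u‖ ^ 2)
  exact h1.add h2

private lemma inner_sub_self_expand (a b : EuclideanSpace ℝ (Fin d)) :
    ⟪a, b - a⟫ = ⟪a, b⟫ - ‖a‖ ^ 2 := by
  rw [inner_sub_right, real_inner_self_eq_norm_sq]

private lemma norm_sub_sq_expand (a b : EuclideanSpace ℝ (Fin d)) :
    ‖b - a‖ ^ 2 = ‖b‖ ^ 2 - 2 * ⟪a, b⟫ + ‖a‖ ^ 2 := by
  rw [norm_sub_sq_real, real_inner_comm]

/-- Strong convexity first-order lower bound. -/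
private lemma lowerA (μ : ℝ) (f : EuclideanSpace ℝ (Fin d) → ℝ) (hf : Differentiable ℝ f)
    (hsc : ConvexOn ℝ Set.univ (fun y => f y - μ / 2 * ‖y‖ ^ 2))
    (a b : EuclideanSpace ℝ (Fin d)) :
    ⟪gradient f a, b - a⟫ + μ / 2 * ‖b - a‖ ^ 2 ≤ f b - f a := by
  set u := b - a with hu
  have hline : ∀ t : ℝ, HasDerivAt (fun s : ℝ => f (a + s • u) - μ / 2 * ‖a + s • u‖ ^ 2)
      (⟪gradient f (a + t • u), u⟫ - μ / 2 * (2 * ⟪a, u⟫ + 2 * t * ‖u‖ ^ 2)) t :=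
    fun t => (lineDeriv' f hf a u t).sub ((normsqLineDeriv a u t).const_mul (μ / 2))
  have hconv : ConvexOn ℝ Set.univ (fun t : ℝ => f (a + t • u) - μ / 2 * ‖a + t • u‖ ^ 2) := by
    have h := hsc.comp_affineMap (AffineMap.lineMap a b)
    have : ((fun y => f y - μ / 2 * ‖y‖ ^ 2) ∘ (AffineMap.lineMap a b : ℝ →ᵃ[ℝ] _))
        = fun t : ℝ => f (a + t • u) - μ / 2 * ‖a + t • u‖ ^ 2 := by
      funext t
      simp [Function.comp, AffineMap.lineMap_apply, hu, add_comm]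
    rw [this] at h
    simpa using h
  have hs := hconv.le_slope_of_hasDerivAt (Set.mem_univ 0) (Set.mem_univ 1) one_pos (hline 0)
  rw [slope_def_field] at hs
  have e0 : a + (0 : ℝ) • u = a := by simp
  have e1 : a + (1 : ℝ) • u = b := by simp [hu]
  rw [e0, e1] at hs
  simp only [div_one, sub_zero, mul_zero, add_zero] at hs
  have e2 := inner_sub_self_expand a b
  have e3 := norm_sub_sq_expand a b
  rw [← hu] at e2 e3
  have h2 : μ / 2 * (2 * ⟪a, u⟫ + 0 * ‖u‖ ^ 2) = μ * ⟪a, b⟫ - μ * ‖a‖ ^ 2 := by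
    rw [e2]; ring
  have h3 : μ / 2 * ‖u‖ ^ 2 = μ / 2 * ‖b‖ ^ 2 - μ * ⟪a, b⟫ + μ / 2 * ‖a‖ ^ 2 := by
    rw [e3]; ring
  linarith

/-- Smoothness first-order upper bound. -/
private lemma upperB (L : ℝ) (f : EuclideanSpace ℝ (Fin d) → ℝ) (hf : Differentiable ℝ f)
    (hsmooth : ∀ x y, ‖gradient f x - gradient f y‖ ≤ L * ‖x - y‖)
    (a b : EuclideanSpace ℝ (Fin d)) :
    f b - f a ≤ ⟪gradient f a, b - a⟫ + L / 2 * ‖b - a‖ ^ 2 := by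
  set u := b - a with hu
  have hline : ∀ t : ℝ, HasDerivAt (fun s : ℝ => L / 2 * ‖a + s • u‖ ^ 2 - f (a + s • u))
      (L / 2 * (2 * ⟪a, u⟫ + 2 * t * ‖u‖ ^ 2) - ⟪gradient f (a + t • u), u⟫) t :=
    fun t => ((normsqLineDeriv a u t).const_mul (L / 2)).sub (lineDeriv' f hf a u t)
  have hdiff : Differentiable ℝ (fun s : ℝ => L / 2 * ‖a + s • u‖ ^ 2 - f (a + s • u)) :=
    fun t => (hline t).differentiableAt
  have hmono : Monotone (deriv (fun s : ℝ => L / 2 * ‖a + s • u‖ ^ 2 - f (a + s • u))) := by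
    intro s t hst
    rw [(hline s).deriv, (hline t).deriv]
    have hip : ⟪gradient f (a + t • u) - gradient f (a + s • u), u⟫
        ≤ ‖gradient f (a + t • u) - gradient f (a + s • u)‖ * ‖u‖ := real_inner_le_norm _ _
    have hls := hsmooth (a + t • u) (a + s • u)
    have hd : (a + t • u) - (a + s • u) = (t - s) • u := by module
    rw [hd, norm_smul, Real.norm_eq_abs, abs_of_nonneg (by linarith : (0:ℝ) ≤ t - s)] at hls
    have hiu : ⟪gradient f (a + t • u) - gradient f (a + s • u), u⟫
        = ⟪gradient f (a + t • u), u⟫ - ⟪gradient f (a + s • u), u⟫ := inner_sub_left _ _ _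
    have hn : (0:ℝ) ≤ ‖u‖ := norm_nonneg u
    nlinarith [mul_le_mul_of_nonneg_right hls hn]
  have hconv := hmono.convexOn_univ_of_deriv hdiff
  have hs := hconv.le_slope_of_hasDerivAt (Set.mem_univ 0) (Set.mem_univ 1) one_pos (hline 0)
  rw [slope_def_field] at hs
  have e0 : a + (0 : ℝ) • u = a := by simp
  have e1 : a + (1 : ℝ) • u = b := by simp [hu]
  rw [e0, e1] at hs
  simp only [div_one, sub_zero, mul_zero, add_zero] at hs
  have e2 := inner_sub_self_expand a b
  have e3 := norm_sub_sq_expand a b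
  rw [← hu] at e2 e3
  have h2 : L / 2 * (2 * ⟪a, u⟫ + 0 * ‖u‖ ^ 2) = L * ⟪a, b⟫ - L * ‖a‖ ^ 2 := by
    rw [e2]; ring
  have h3 : L / 2 * ‖u‖ ^ 2 = L / 2 * ‖b‖ ^ 2 - L * ⟪a, b⟫ + L / 2 * ‖a‖ ^ 2 := by
    rw [e3]; ring
  linarith

end Aux

/-- Midpoint estimate for `L`-smooth, `μ`-strongly convex functions:
`|f(y) - f(z) - ⟨∇f((y+z)/2), y - z⟩| ≤ ((L-μ)/8)‖y - z‖²`. -/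
theorem midpoint_gradient_estimate {d : ℕ} (μ L : ℝ) (hμ : 0 < μ) (hμL : μ ≤ L)
    (f : EuclideanSpace ℝ (Fin d) → ℝ)
    (hf : Differentiable ℝ f)
    (hsmooth : ∀ x y, ‖gradient f x - gradient f y‖ ≤ L * ‖x - y‖)
    (hsc : ConvexOn ℝ Set.univ (fun y => f y - μ / 2 * ‖y‖ ^ 2)) :
    ∀ y z : EuclideanSpace ℝ (Fin d),
      |f y - f z - ⟪gradient f ((2:ℝ)⁻¹ • (y + z)), y - z⟫| ≤
        (L - μ) / 8 * ‖y - z‖ ^ 2 := by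
  intro y z
  set m : EuclideanSpace ℝ (Fin d) := (2:ℝ)⁻¹ • (y + z) with hm
  have hy1 := lowerA μ f hf hsc m y
  have hz1 := lowerA μ f hf hsc m z
  have hy2 := upperB L f hf hsmooth m y
  have hz2 := upperB L f hf hsmooth m z
  have hym : y - m = (2:ℝ)⁻¹ • (y - z) := by rw [hm]; module
  have hzm : z - m = -((2:ℝ)⁻¹ • (y - z)) := by rw [hm]; module
  have hny : ‖y - m‖ ^ 2 = (1/4) * ‖y - z‖ ^ 2 := by
    rw [hym, norm_smul, Real.norm_eq_abs]
    rw [mul_pow, sq_abs]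
    norm_num
  have hnz : ‖z - m‖ ^ 2 = (1/4) * ‖y - z‖ ^ 2 := by
    rw [hzm, norm_neg, norm_smul, Real.norm_eq_abs]
    rw [mul_pow, sq_abs]
    norm_num
  have hinner : ⟪gradient f m, y - m⟫ - ⟪gradient f m, z - m⟫ = ⟪gradient f m, y - z⟫ := by
    rw [← inner_sub_right]
    congr 1
    abel
  rw [hny] at hy1 hy2
  rw [hnz] at hz1 hz2
  rw [abs_le]
  constructor <;> nlinarith [hinner, hy1, hz1, hy2, hz2]
end
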